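/- arXiv:2112.14962 — 3 statements merged into one kernel-verified Lean document; each statement's English description precedes it below -/
import Mathlib

section
/- For every formula F of multiplicative linear logic with units (built from atoms, dual atoms, ⊗, ⅋, 1, ⊥ and containing no occurrence of ∘, ! or ?), F is provable in the sequent system MLLu if and only if F is provable in the sequent system MLLu^j. -/
/-! # Formulas of multiplicative exponential linear logic with the placeholder `∘` -/

inductive Formula where
  | atom  : ℕ → Formula
  | natom : ℕ → Formula
  | parr  : Formula → Formula → Formula
  | tens  : Formula → Formula → Formula
  | bang  : Formula → Formula
  | quest : Formula → Formula
  | bot   : Formula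
  | one   : Formula
  | hole  : Formula
  deriving DecidableEq

namespace Formula

/-- A MELL-formula: a formula with no occurrence of the placeholder `∘`. -/
def isMELL : Formula → Prop
  | atom _   => True
  | natom _  => True
  | parr A B => isMELL A ∧ isMELL B
  | tens A B => isMELL A ∧ isMELL B
  | bang A   => isMELL A
  | quest A  => isMELL A
  | bot      => True
  | one      => True
  | hole     => False

/-- A formula without modalities (no `!` and no `?`). -/
def noMod : Formula → Prop
  | atom _   => True
  | natom _  => True
  | parr A B => noMod A ∧ noMod B
  | tens A B => noMod A ∧ noMod B
  | bang _   => False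
  | quest _  => False
  | bot      => True
  | one      => True
  | hole     => True

/-- A formula of multiplicative linear logic with units:
built from atoms, dual atoms, `⊗`, `⅋`, `1`, `⊥`; no `∘`, `!`, `?`. -/
def isMLLu : Formula → Prop
  | atom _   => True
  | natom _  => True
  | parr A B => isMLLu A ∧ isMLLu B
  | tens A B => isMLLu A ∧ isMLLu B
  | bang _   => False
  | quest _  => False
  | bot      => True
  | one      => True
  | hole     => False

/-- Linear negation, defined through the De Morgan laws. -/
def dual : Formula → Formula
  | atom a   => natom a
  | natom a  => atom a
  | parr A B => tens (dual A) (dual B)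
  | tens A B => parr (dual A) (dual B)
  | bang A   => quest (dual A)
  | quest A  => bang (dual A)
  | bot      => one
  | one      => bot
  | hole     => hole

/-- `questN n F` is `?ⁿ F`. -/
def questN : ℕ → Formula → Formula
  | 0,     A => A
  | n + 1, A => quest (questN n A)

/-- A weaken-contradiction: a formula `?ⁿ(A ⊗ Ā)` with `A` a MELL-formula. -/
def isWeakenContradiction (C : Formula) : Prop :=
  ∃ (n : ℕ) (A : Formula), A.isMELL ∧ C = questN n (tens A (dual A))

end Formula

/-- A sequent is a (non-empty) multiset of formulas. -/
abbrev Sequent := Multiset Formula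

/-! ## Sequent systems -/

/-- The system MLL = {ax, ⊗, ⅋} (it coincides with the linear system MLLˡ). -/
inductive ProvMLL : Sequent → Prop
  | ax (a : ℕ) : ProvMLL {Formula.atom a, Formula.natom a}
  | parr (Γ : Sequent) (A B : Formula) :
      ProvMLL (A ::ₘ B ::ₘ Γ) → ProvMLL (Formula.parr A B ::ₘ Γ)
  | tens (Γ Δ : Sequent) (A B : Formula) :
      ProvMLL (A ::ₘ Γ) → ProvMLL (B ::ₘ Δ) →
      ProvMLL (Formula.tens A B ::ₘ (Γ + Δ))

/-- The system MLLu = {ax, ⊗, ⅋, ⊥, 1}. -/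
inductive ProvMLLu : Sequent → Prop
  | ax (a : ℕ) : ProvMLLu {Formula.atom a, Formula.natom a}
  | parr (Γ : Sequent) (A B : Formula) :
      ProvMLLu (A ::ₘ B ::ₘ Γ) → ProvMLLu (Formula.parr A B ::ₘ Γ)
  | tens (Γ Δ : Sequent) (A B : Formula) :
      ProvMLLu (A ::ₘ Γ) → ProvMLLu (B ::ₘ Δ) →
      ProvMLLu (Formula.tens A B ::ₘ (Γ + Δ))
  | bot (Γ : Sequent) : ProvMLLu Γ → ProvMLLu (Formula.bot ::ₘ Γ)
  | one : ProvMLLu {Formula.one}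

/-- The system MELL = {ax, ⊗, ⅋, ⊥, 1, !p, der, w?, c?}. -/
inductive ProvMELL : Sequent → Prop
  | ax (a : ℕ) : ProvMELL {Formula.atom a, Formula.natom a}
  | parr (Γ : Sequent) (A B : Formula) :
      ProvMELL (A ::ₘ B ::ₘ Γ) → ProvMELL (Formula.parr A B ::ₘ Γ)
  | tens (Γ Δ : Sequent) (A B : Formula) :
      ProvMELL (A ::ₘ Γ) → ProvMELL (B ::ₘ Δ) →
      ProvMELL (Formula.tens A B ::ₘ (Γ + Δ))
  | bot (Γ : Sequent) : ProvMELL Γ → ProvMELL (Formula.bot ::ₘ Γ)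
  | one : ProvMELL {Formula.one}
  | prom (Γ : Sequent) (A : Formula) :
      ProvMELL (A ::ₘ Γ.map Formula.quest) →
      ProvMELL (Formula.bang A ::ₘ Γ.map Formula.quest)
  | der (Γ : Sequent) (A : Formula) :
      ProvMELL (A ::ₘ Γ) → ProvMELL (Formula.quest A ::ₘ Γ)
  | weak (Γ : Sequent) (A : Formula) :
      ProvMELL Γ → ProvMELL (Formula.quest A ::ₘ Γ)
  | contr (Γ : Sequent) (A : Formula) :
      ProvMELL (Formula.quest A ::ₘ Formula.quest A ::ₘ Γ) →
      ProvMELL (Formula.quest A ::ₘ Γ)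

/-- The system MLLu^j = {ax_j, 1_j, ⊥^j, ⅋, ⊗}. -/
inductive ProvMLLuj : Sequent → Prop
  | axj (a n : ℕ) :
      ProvMLLuj (Formula.atom a ::ₘ Formula.natom a ::ₘ Multiset.replicate n Formula.hole)
  | onej (n : ℕ) : ProvMLLuj (Formula.one ::ₘ Multiset.replicate n Formula.hole)
  | botj (Γ : Sequent) :
      ProvMLLuj (Formula.hole ::ₘ Γ) → ProvMLLuj (Formula.bot ::ₘ Γ)
  | parr (Γ : Sequent) (A B : Formula) :
      ProvMLLuj (A ::ₘ B ::ₘ Γ) → ProvMLLuj (Formula.parr A B ::ₘ Γ)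
  | tens (Γ Δ : Sequent) (A B : Formula) :
      ProvMLLuj (A ::ₘ Γ) → ProvMLLuj (B ::ₘ Δ) →
      ProvMLLuj (Formula.tens A B ::ₘ (Γ + Δ))

/-- The system MELL^j = {ax_j, 1_j, ⊥^j, w^j, ⅋, ⊗, w!p, der, dig?, dig∘, c?}. -/
inductive ProvMELLj : Sequent → Prop
  | axj (a n : ℕ) :
      ProvMELLj (Formula.atom a ::ₘ Formula.natom a ::ₘ Multiset.replicate n Formula.hole)
  | onej (n : ℕ) : ProvMELLj (Formula.one ::ₘ Multiset.replicate n Formula.hole)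
  | botj (Γ : Sequent) :
      ProvMELLj (Formula.hole ::ₘ Γ) → ProvMELLj (Formula.bot ::ₘ Γ)
  | wj (Γ : Sequent) (A : Formula) :
      ProvMELLj (Formula.hole ::ₘ Γ) → ProvMELLj (Formula.quest A ::ₘ Γ)
  | parr (Γ : Sequent) (A B : Formula) :
      ProvMELLj (A ::ₘ B ::ₘ Γ) → ProvMELLj (Formula.parr A B ::ₘ Γ)
  | tens (Γ Δ : Sequent) (A B : Formula) :
      ProvMELLj (A ::ₘ Γ) → ProvMELLj (B ::ₘ Δ) →
      ProvMELLj (Formula.tens A B ::ₘ (Γ + Δ))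
  | wprom (Γ : Sequent) (A : Formula) :
      ProvMELLj (A ::ₘ Γ) → ProvMELLj (Formula.bang A ::ₘ Γ.map Formula.quest)
  | der (Γ : Sequent) (A : Formula) :
      ProvMELLj (A ::ₘ Γ) → ProvMELLj (Formula.quest A ::ₘ Γ)
  | dig (Γ : Sequent) (A : Formula) :
      ProvMELLj (Formula.quest (Formula.quest A) ::ₘ Γ) →
      ProvMELLj (Formula.quest A ::ₘ Γ)
  | digo (Γ : Sequent) :
      ProvMELLj (Formula.quest Formula.hole ::ₘ Γ) → ProvMELLj (Formula.hole ::ₘ Γ)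
  | contr (Γ : Sequent) (A : Formula) :
      ProvMELLj (Formula.quest A ::ₘ Formula.quest A ::ₘ Γ) →
      ProvMELLj (Formula.quest A ::ₘ Γ)

/-- The system MELL^j extended with the cut rule (cut formulas are MELL-formulas). -/
inductive ProvMELLjCut : Sequent → Prop
  | axj (a n : ℕ) :
      ProvMELLjCut (Formula.atom a ::ₘ Formula.natom a ::ₘ Multiset.replicate n Formula.hole)
  | onej (n : ℕ) : ProvMELLjCut (Formula.one ::ₘ Multiset.replicate n Formula.hole)
  | botj (Γ : Sequent) :
      ProvMELLjCut (Formula.hole ::ₘ Γ) → ProvMELLjCut (Formula.bot ::ₘ Γ)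
  | wj (Γ : Sequent) (A : Formula) :
      ProvMELLjCut (Formula.hole ::ₘ Γ) → ProvMELLjCut (Formula.quest A ::ₘ Γ)
  | parr (Γ : Sequent) (A B : Formula) :
      ProvMELLjCut (A ::ₘ B ::ₘ Γ) → ProvMELLjCut (Formula.parr A B ::ₘ Γ)
  | tens (Γ Δ : Sequent) (A B : Formula) :
      ProvMELLjCut (A ::ₘ Γ) → ProvMELLjCut (B ::ₘ Δ) →
      ProvMELLjCut (Formula.tens A B ::ₘ (Γ + Δ))
  | wprom (Γ : Sequent) (A : Formula) :
      ProvMELLjCut (A ::ₘ Γ) → ProvMELLjCut (Formula.bang A ::ₘ Γ.map Formula.quest)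
  | der (Γ : Sequent) (A : Formula) :
      ProvMELLjCut (A ::ₘ Γ) → ProvMELLjCut (Formula.quest A ::ₘ Γ)
  | dig (Γ : Sequent) (A : Formula) :
      ProvMELLjCut (Formula.quest (Formula.quest A) ::ₘ Γ) →
      ProvMELLjCut (Formula.quest A ::ₘ Γ)
  | digo (Γ : Sequent) :
      ProvMELLjCut (Formula.quest Formula.hole ::ₘ Γ) → ProvMELLjCut (Formula.hole ::ₘ Γ)
  | contr (Γ : Sequent) (A : Formula) :
      ProvMELLjCut (Formula.quest A ::ₘ Formula.quest A ::ₘ Γ) →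
      ProvMELLjCut (Formula.quest A ::ₘ Γ)
  | cut (Γ Δ : Sequent) (A : Formula) :
      A.isMELL → ProvMELLjCut (A ::ₘ Γ) → ProvMELLjCut (A.dual ::ₘ Δ) →
      ProvMELLjCut (Γ + Δ)

/-- The linear system MLLu^ℓ = {ax_j, 1_j, ⅋, ⊗}. -/
inductive ProvMLLuLin : Sequent → Prop
  | axj (a n : ℕ) :
      ProvMLLuLin (Formula.atom a ::ₘ Formula.natom a ::ₘ Multiset.replicate n Formula.hole)
  | onej (n : ℕ) : ProvMLLuLin (Formula.one ::ₘ Multiset.replicate n Formula.hole)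
  | parr (Γ : Sequent) (A B : Formula) :
      ProvMLLuLin (A ::ₘ B ::ₘ Γ) → ProvMLLuLin (Formula.parr A B ::ₘ Γ)
  | tens (Γ Δ : Sequent) (A B : Formula) :
      ProvMLLuLin (A ::ₘ Γ) → ProvMLLuLin (B ::ₘ Δ) →
      ProvMLLuLin (Formula.tens A B ::ₘ (Γ + Δ))

/-- The linear system MELL^ℓ = {ax_j, 1_j, ⅋, ⊗, w!p}. -/
inductive ProvMELLLin : Sequent → Prop
  | axj (a n : ℕ) :
      ProvMELLLin (Formula.atom a ::ₘ Formula.natom a ::ₘ Multiset.replicate n Formula.hole)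
  | onej (n : ℕ) : ProvMELLLin (Formula.one ::ₘ Multiset.replicate n Formula.hole)
  | parr (Γ : Sequent) (A B : Formula) :
      ProvMELLLin (A ::ₘ B ::ₘ Γ) → ProvMELLLin (Formula.parr A B ::ₘ Γ)
  | tens (Γ Δ : Sequent) (A B : Formula) :
      ProvMELLLin (A ::ₘ Γ) → ProvMELLLin (B ::ₘ Δ) →
      ProvMELLLin (Formula.tens A B ::ₘ (Γ + Δ))
  | wprom (Γ : Sequent) (A : Formula) :
      ProvMELLLin (A ::ₘ Γ) → ProvMELLLin (Formula.bang A ::ₘ Γ.map Formula.quest)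

/-- MELL with the cut rule, recording the list of active cut formulas of the derivation. -/
inductive ProvMELLCutL : Sequent → List Formula → Prop
  | ax (a : ℕ) : ProvMELLCutL {Formula.atom a, Formula.natom a} []
  | parr (Γ : Sequent) (A B : Formula) (L : List Formula) :
      ProvMELLCutL (A ::ₘ B ::ₘ Γ) L → ProvMELLCutL (Formula.parr A B ::ₘ Γ) L
  | tens (Γ Δ : Sequent) (A B : Formula) (L₁ L₂ : List Formula) :
      ProvMELLCutL (A ::ₘ Γ) L₁ → ProvMELLCutL (B ::ₘ Δ) L₂ →
      ProvMELLCutL (Formula.tens A B ::ₘ (Γ + Δ)) (L₁ ++ L₂)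
  | bot (Γ : Sequent) (L : List Formula) :
      ProvMELLCutL Γ L → ProvMELLCutL (Formula.bot ::ₘ Γ) L
  | one : ProvMELLCutL {Formula.one} []
  | prom (Γ : Sequent) (A : Formula) (L : List Formula) :
      ProvMELLCutL (A ::ₘ Γ.map Formula.quest) L →
      ProvMELLCutL (Formula.bang A ::ₘ Γ.map Formula.quest) L
  | der (Γ : Sequent) (A : Formula) (L : List Formula) :
      ProvMELLCutL (A ::ₘ Γ) L → ProvMELLCutL (Formula.quest A ::ₘ Γ) L
  | weak (Γ : Sequent) (A : Formula) (L : List Formula) :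
      ProvMELLCutL Γ L → ProvMELLCutL (Formula.quest A ::ₘ Γ) L
  | contr (Γ : Sequent) (A : Formula) (L : List Formula) :
      ProvMELLCutL (Formula.quest A ::ₘ Formula.quest A ::ₘ Γ) L →
      ProvMELLCutL (Formula.quest A ::ₘ Γ) L
  | cut (Γ Δ : Sequent) (A : Formula) (L₁ L₂ : List Formula) :
      A.isMELL → ProvMELLCutL (A ::ₘ Γ) L₁ → ProvMELLCutL (A.dual ::ₘ Δ) L₂ →
      ProvMELLCutL (Γ + Δ) (A :: (L₁ ++ L₂))

/-! ## Deep inference rewriting -/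

/-- Closure of a rewrite relation under arbitrary formula contexts. -/
inductive Deep (r : Formula → Formula → Prop) : Formula → Formula → Prop
  | base {A B : Formula} : r A B → Deep r A B
  | parrL {A A' : Formula} (B : Formula) :
      Deep r A A' → Deep r (Formula.parr A B) (Formula.parr A' B)
  | parrR (A : Formula) {B B' : Formula} :
      Deep r B B' → Deep r (Formula.parr A B) (Formula.parr A B')
  | tensL {A A' : Formula} (B : Formula) :
      Deep r A A' → Deep r (Formula.tens A B) (Formula.tens A' B)
  | tensR (A : Formula) {B B' : Formula} :
      Deep r B B' → Deep r (Formula.tens A B) (Formula.tens A B')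
  | bang {A A' : Formula} : Deep r A A' → Deep r (Formula.bang A) (Formula.bang A')
  | quest {A A' : Formula} : Deep r A A' → Deep r (Formula.quest A) (Formula.quest A')

/-- Base steps of all the deep-MELL rules:
deep dereliction, deep digging, deep ∘-digging, deep ⊥, deep weakening, deep contraction. -/
inductive DeepMELLBase : Formula → Formula → Prop
  | der (A : Formula) : DeepMELLBase A (Formula.quest A)
  | dig (A : Formula) :
      DeepMELLBase (Formula.quest (Formula.quest A)) (Formula.quest A)
  | digHole : DeepMELLBase (Formula.quest Formula.hole) Formula.hole
  | bot : DeepMELLBase Formula.hole Formula.bot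
  | weak (A : Formula) : DeepMELLBase Formula.hole (Formula.quest A)
  | contr (A : Formula) :
      DeepMELLBase (Formula.parr (Formula.quest A) (Formula.quest A)) (Formula.quest A)

/-- Base steps of deep dereliction, deep digging and deep ∘-digging. -/
inductive DigBase : Formula → Formula → Prop
  | der (A : Formula) : DigBase A (Formula.quest A)
  | dig (A : Formula) : DigBase (Formula.quest (Formula.quest A)) (Formula.quest A)
  | digHole : DigBase (Formula.quest Formula.hole) Formula.hole

/-- Base steps of deep weakening and deep ⊥. -/
inductive WeakBase : Formula → Formula → Prop
  | bot : WeakBase Formula.hole Formula.bot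
  | weak (A : Formula) : WeakBase Formula.hole (Formula.quest A)

/-- Base step of deep contraction. -/
inductive ContrBase : Formula → Formula → Prop
  | contr (A : Formula) :
      ContrBase (Formula.parr (Formula.quest A) (Formula.quest A)) (Formula.quest A)

/-- Base steps of deep ⊥, deep weakening, deep ?-contraction, deep ∘-contraction,
and the deep associativity-commutativity rules. -/
inductive WCACBase : Formula → Formula → Prop
  | bot : WCACBase Formula.hole Formula.bot
  | weak (A : Formula) : WCACBase Formula.hole (Formula.quest A)
  | contr (A : Formula) :
      WCACBase (Formula.parr (Formula.quest A) (Formula.quest A)) (Formula.quest A)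
  | contrHole :
      WCACBase (Formula.parr Formula.hole Formula.hole) Formula.hole
  | tensAssoc (A B C : Formula) :
      WCACBase (Formula.tens (Formula.tens A B) C) (Formula.tens A (Formula.tens B C))
  | parrAssoc (A B C : Formula) :
      WCACBase (Formula.parr (Formula.parr A B) C) (Formula.parr A (Formula.parr B C))
  | tensComm (A B : Formula) : WCACBase (Formula.tens A B) (Formula.tens B A)
  | parrComm (A B : Formula) : WCACBase (Formula.parr A B) (Formula.parr B A)

/-- One deep rewriting step inside a sequent: rewrite one member of the multiset. -/
def SeqStep (r : Formula → Formula → Prop) (Γ Γ' : Sequent) : Prop :=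
  ∃ (A A' : Formula) (Δ : Sequent), Deep r A A' ∧ Γ = A ::ₘ Δ ∧ Γ' = A' ::ₘ Δ

/-- Derivability between sequents by a finite sequence of deep rewriting steps. -/
def SeqDeriv (r : Formula → Formula → Prop) : Sequent → Sequent → Prop :=
  Relation.ReflTransGen (SeqStep r)

/-- Derivability between formulas by a finite sequence of deep rewriting steps. -/
def FormDeriv (r : Formula → Formula → Prop) : Formula → Formula → Prop :=
  Relation.ReflTransGen (Deep r)

/-- Equivalence of formulas modulo associativity and commutativity of ⊗ and ⅋. -/
inductive ACEq : Formula → Formula → Prop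
  | refl (A : Formula) : ACEq A A
  | symm {A B : Formula} : ACEq A B → ACEq B A
  | trans {A B C : Formula} : ACEq A B → ACEq B C → ACEq A C
  | tensAssoc (A B C : Formula) :
      ACEq (Formula.tens (Formula.tens A B) C) (Formula.tens A (Formula.tens B C))
  | parrAssoc (A B C : Formula) :
      ACEq (Formula.parr (Formula.parr A B) C) (Formula.parr A (Formula.parr B C))
  | tensComm (A B : Formula) : ACEq (Formula.tens A B) (Formula.tens B A)
  | parrComm (A B : Formula) : ACEq (Formula.parr A B) (Formula.parr B A)
  | tensCongr {A A' B B' : Formula} :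
      ACEq A A' → ACEq B B' → ACEq (Formula.tens A B) (Formula.tens A' B')
  | parrCongr {A A' B B' : Formula} :
      ACEq A A' → ACEq B B' → ACEq (Formula.parr A B) (Formula.parr A' B')
  | bangCongr {A A' : Formula} : ACEq A A' → ACEq (Formula.bang A) (Formula.bang A')
  | questCongr {A A' : Formula} : ACEq A A' → ACEq (Formula.quest A) (Formula.quest A')

/-! ## Mixed graphs and relation webs -/

/-- A mixed graph: a finite set of vertices from `ℕ`, an undirected edge relation `R`
and a directed edge relation `lt`. -/
structure MGraph where
  verts : Finset ℕ
  R : ℕ → ℕ → Prop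
  lt : ℕ → ℕ → Prop

namespace MGraph

/-- The axioms of mixed graphs: `R` symmetric and irreflexive, `lt` irreflexive,
`R ∩ lt = ∅`, and all edges between vertices. -/
def IsMixed (G : MGraph) : Prop :=
  (∀ u v, G.R u v → G.R v u) ∧
  (∀ v, ¬ G.R v v) ∧
  (∀ v, ¬ G.lt v v) ∧
  (∀ u v, ¬ (G.R u v ∧ G.lt u v)) ∧
  (∀ u v, G.R u v → u ∈ G.verts ∧ v ∈ G.verts) ∧
  (∀ u v, G.lt u v → u ∈ G.verts ∧ v ∈ G.verts)

/-- `u` and `v` are joined by no edge at all. -/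
def noEdge (G : MGraph) (u v : ℕ) : Prop :=
  ¬ G.R u v ∧ ¬ G.R v u ∧ ¬ G.lt u v ∧ ¬ G.lt v u

/-- A relation web: a non-empty mixed graph with `lt` transitive, `(V,R)` a cograph
(no induced P₄), `(V,lt)` a series-parallel order (no induced N), and no induced
3-color triangle. -/
def IsRelWeb (G : MGraph) : Prop :=
  G.IsMixed ∧ G.verts.Nonempty ∧
  (∀ u v w, G.lt u v → G.lt v w → G.lt u w) ∧
  (¬ ∃ w x y z, w ∈ G.verts ∧ x ∈ G.verts ∧ y ∈ G.verts ∧ z ∈ G.verts ∧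
      w ≠ x ∧ w ≠ y ∧ w ≠ z ∧ x ≠ y ∧ x ≠ z ∧ y ≠ z ∧
      G.R w x ∧ G.R x y ∧ G.R y z ∧ ¬ G.R w y ∧ ¬ G.R w z ∧ ¬ G.R x z) ∧
  (¬ ∃ u v y z, u ∈ G.verts ∧ v ∈ G.verts ∧ y ∈ G.verts ∧ z ∈ G.verts ∧
      u ≠ v ∧ u ≠ y ∧ u ≠ z ∧ v ≠ y ∧ v ≠ z ∧ y ≠ z ∧
      G.lt u v ∧ G.lt y v ∧ G.lt y z ∧
      ¬ G.lt u y ∧ ¬ G.lt y u ∧ ¬ G.lt u z ∧ ¬ G.lt z u ∧ ¬ G.lt v z ∧ ¬ G.lt z v) ∧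
  (¬ ∃ u w v, u ∈ G.verts ∧ w ∈ G.verts ∧ v ∈ G.verts ∧
      u ≠ w ∧ u ≠ v ∧ w ≠ v ∧
      G.noEdge u w ∧ G.R w v ∧ (G.lt u v ∨ G.lt v u))

/-- `G ⅋ H`: disjoint union. -/
def uparr (G H : MGraph) : MGraph where
  verts := G.verts ∪ H.verts
  R := fun u v => G.R u v ∨ H.R u v
  lt := fun u v => G.lt u v ∨ H.lt u v

/-- `G ⊗ H`: disjoint union plus all undirected edges between `G` and `H`. -/
def utens (G H : MGraph) : MGraph where
  verts := G.verts ∪ H.verts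
  R := fun u v => G.R u v ∨ H.R u v ∨
    (u ∈ G.verts ∧ v ∈ H.verts) ∨ (u ∈ H.verts ∧ v ∈ G.verts)
  lt := fun u v => G.lt u v ∨ H.lt u v

/-- `G ◁ H`: disjoint union plus all directed edges from `G` to `H`. -/
def useq (G H : MGraph) : MGraph where
  verts := G.verts ∪ H.verts
  R := fun u v => G.R u v ∨ H.R u v
  lt := fun u v => G.lt u v ∨ H.lt u v ∨ (u ∈ G.verts ∧ v ∈ H.verts)

/-- Graphs constructible from single vertices using `⅋`, `◁` and `⊗`
(applied to disjoint graphs). -/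
inductive Constructible : MGraph → Prop
  | single (n : ℕ) :
      Constructible ⟨{n}, fun _ _ => False, fun _ _ => False⟩
  | parr {G H : MGraph} : Constructible G → Constructible H →
      Disjoint G.verts H.verts → Constructible (uparr G H)
  | tens {G H : MGraph} : Constructible G → Constructible H →
      Disjoint G.verts H.verts → Constructible (utens G H)
  | seq {G H : MGraph} : Constructible G → Constructible H →
      Disjoint G.verts H.verts → Constructible (useq G H)

end MGraph

/-! ## Labeled graphs and the translation of formulas -/

/-- Vertex labels: atoms, dual atoms, `!`, `?`, `1`, `⊥`, `∘`. -/
inductive GLabel where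
  | atom  : ℕ → GLabel
  | natom : ℕ → GLabel
  | bang  : GLabel
  | quest : GLabel
  | one   : GLabel
  | bot   : GLabel
  | hole  : GLabel
  deriving DecidableEq

/-- Atomic labels (atoms or dual atoms). -/
def GLabel.isAtom : GLabel → Prop
  | .atom _  => True
  | .natom _ => True
  | _        => False

/-- A labeled mixed graph. -/
structure LabGraph extends MGraph where
  lab : ℕ → GLabel

namespace LabGraph

/-- A labeled graph is a relation web when its underlying mixed graph is. -/
def IsWeb (G : LabGraph) : Prop := G.toMGraph.IsRelWeb

/-- Properly labeled: a vertex has an outgoing `lt`-edge iff its label is `!` or `?`. -/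
def ProperlyLabeled (G : LabGraph) : Prop :=
  ∀ v ∈ G.verts, (∃ w, G.lt v w) ↔ (G.lab v = GLabel.bang ∨ G.lab v = GLabel.quest)

/-- Modal: properly labeled, and vertices with `lt`-edges to a common target are
`lt`-comparable. -/
def IsModalLab (G : LabGraph) : Prop :=
  G.ProperlyLabeled ∧
  ∀ u v w, u ∈ G.verts → v ∈ G.verts → w ∈ G.verts →
    G.lt u w → G.lt v w → u ≠ v → (G.lt u v ∨ G.lt v u)

/-- A (labeled) modal relation web. -/
def IsModalWeb (G : LabGraph) : Prop := G.IsWeb ∧ G.IsModalLab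

/-- The single-vertex labeled graph. -/
def point (l : GLabel) : LabGraph where
  verts := {0}
  R := fun _ _ => False
  lt := fun _ _ => False
  lab := fun _ => l

/-- `G ⅋ H` on labeled graphs, with vertices renamed evenly/oddly so as to be disjoint. -/
def gparr (G H : LabGraph) : LabGraph where
  verts := G.verts.image (fun n => 2 * n) ∪ H.verts.image (fun n => 2 * n + 1)
  R := fun u v =>
    (u % 2 = 0 ∧ v % 2 = 0 ∧ G.R (u / 2) (v / 2)) ∨
    (u % 2 = 1 ∧ v % 2 = 1 ∧ H.R (u / 2) (v / 2))
  lt := fun u v =>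
    (u % 2 = 0 ∧ v % 2 = 0 ∧ G.lt (u / 2) (v / 2)) ∨
    (u % 2 = 1 ∧ v % 2 = 1 ∧ H.lt (u / 2) (v / 2))
  lab := fun n => if n % 2 = 0 then G.lab (n / 2) else H.lab (n / 2)

/-- `G ⊗ H` on labeled graphs. -/
def gtens (G H : LabGraph) : LabGraph where
  verts := (gparr G H).verts
  R := fun u v => (gparr G H).R u v ∨
    (u % 2 = 0 ∧ v % 2 = 1 ∧ u / 2 ∈ G.verts ∧ v / 2 ∈ H.verts) ∨
    (u % 2 = 1 ∧ v % 2 = 0 ∧ u / 2 ∈ H.verts ∧ v / 2 ∈ G.verts)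
  lt := (gparr G H).lt
  lab := (gparr G H).lab

/-- `G ◁ H` on labeled graphs. -/
def gseq (G H : LabGraph) : LabGraph where
  verts := (gparr G H).verts
  R := (gparr G H).R
  lt := fun u v => (gparr G H).lt u v ∨
    (u % 2 = 0 ∧ v % 2 = 1 ∧ u / 2 ∈ G.verts ∧ v / 2 ∈ H.verts)
  lab := (gparr G H).lab

/-- The translation `⟦·⟧` of formulas into labeled graphs. -/
def trans : Formula → LabGraph
  | .atom a  => point (.atom a)
  | .natom a => point (.natom a)
  | .one     => point .one
  | .bot     => point .bot
  | .hole    => point .hole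
  | .parr A B => gparr (trans A) (trans B)
  | .tens A B => gtens (trans A) (trans B)
  | .bang A  => gseq (point .bang) (trans A)
  | .quest A => gseq (point .quest) (trans A)

/-- The translation of a sequent (represented as a non-empty list): `⅋` of the members. -/
def transSeq : List Formula → LabGraph
  | [] => point .hole
  | [A] => trans A
  | A :: B :: Γ => gparr (trans A) (transSeq (B :: Γ))

/-- Isomorphism of labeled mixed graphs. -/
def Iso (G H : LabGraph) : Prop :=
  ∃ f : ℕ → ℕ, Set.BijOn f ↑G.verts ↑H.verts ∧
    (∀ u ∈ G.verts, ∀ v ∈ G.verts,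
      (G.R u v ↔ H.R (f u) (f v)) ∧ (G.lt u v ↔ H.lt (f u) (f v))) ∧
    (∀ v ∈ G.verts, H.lab (f v) = G.lab v)

end LabGraph

/-! ## RGB-cographs -/

/-- An RGB-cograph: a labeled graph together with a linking relation. -/
structure RGB extends LabGraph where
  link : ℕ → ℕ → Prop

namespace RGB

/-- The conditions for being an RGB-cograph. -/
def IsRGB (G : RGB) : Prop :=
  G.toLabGraph.IsModalWeb ∧
  (∀ v ∈ G.verts, G.link v v) ∧
  (∀ u v, G.link u v → G.link v u) ∧
  (∀ u v w, G.link u v → G.link v w → G.link u w) ∧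
  (∀ u v, G.link u v → u ∈ G.verts ∧ v ∈ G.verts) ∧
  (∀ v ∈ G.verts, (G.lab v).isAtom →
      ∃! w, w ≠ v ∧ G.link v w ∧ (G.lab w).isAtom) ∧
  (∀ v ∈ G.verts, G.lab v = GLabel.one →
      ∀ w, G.link v w → w ≠ v → G.lab w = GLabel.hole) ∧
  (∀ v ∈ G.verts, G.lab v = GLabel.hole →
      ∃ w, G.link v w ∧ ((G.lab w).isAtom ∨ G.lab w = GLabel.one)) ∧
  (∀ v ∈ G.verts, (G.lab v = GLabel.bang ∨ G.lab v = GLabel.quest) →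
      (∃! w, G.link v w ∧ G.lab w = GLabel.bang) ∧
      (∀ w, G.link v w → G.lab w ≠ GLabel.hole))

/-- Adjacency by an `R`- or `lt`-edge (in either direction). -/
def rlAdj (G : RGB) (u v : ℕ) : Prop :=
  G.R u v ∨ G.R v u ∨ G.lt u v ∨ G.lt v u

/-- Adjacency by a linking edge. -/
def lkAdj (G : RGB) (u v : ℕ) : Prop := G.link u v ∧ u ≠ v

/-- A single step of an alternating path; `true` = linking edge, `false` = R/lt edge. -/
def aeStep (G : RGB) : Bool → ℕ → ℕ → Prop
  | true,  u, v => G.lkAdj u v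
  | false, u, v => G.rlAdj u v

/-- The edges of the list alternate, starting with an edge of kind `b`. -/
def AltChain (G : RGB) : Bool → List ℕ → Prop
  | _, [] => True
  | _, [_] => True
  | b, u :: v :: l => G.aeStep b u v ∧ AltChain G (!b) (v :: l)

/-- An æ-path: a non-empty elementary alternating path on vertices of `G`. -/
def IsAEPath (G : RGB) (l : List ℕ) : Prop :=
  l ≠ [] ∧ l.Nodup ∧ (∀ v ∈ l, v ∈ G.verts) ∧ ∃ b, G.AltChain b l

/-- A path is chordless if no `R`/`lt` edge joins two non-consecutive vertices. -/
def Chordless (G : RGB) (l : List ℕ) : Prop :=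
  ∀ (i j : ℕ) (hi : i < l.length) (hj : j < l.length), i + 2 ≤ j →
    ¬ G.rlAdj (l.get ⟨i, hi⟩) (l.get ⟨j, hj⟩)

/-- æ-connectedness: any two vertices are joined by a chordless æ-path. -/
def AEConnected (G : RGB) : Prop :=
  ∀ u ∈ G.verts, ∀ v ∈ G.verts,
    ∃ l, G.IsAEPath l ∧ G.Chordless l ∧ l.head? = some u ∧ l.getLast? = some v

/-- An æ-cycle, represented by the list of its (distinct) vertices; the closing edge
returns to the first vertex and the number of edges is even so that alternation closes. -/
def IsAECycle (G : RGB) (l : List ℕ) : Prop :=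
  2 ≤ l.length ∧ l.length % 2 = 0 ∧ l.Nodup ∧ (∀ v ∈ l, v ∈ G.verts) ∧
  ∃ b, G.AltChain b (l ++ [l.headI])

/-- Chordlessness for cycles: no `R`/`lt` edge between cyclically non-consecutive
vertices. -/
def ChordlessCyc (G : RGB) (l : List ℕ) : Prop :=
  ∀ (i j : ℕ) (hi : i < l.length) (hj : j < l.length), i + 2 ≤ j →
    ¬ (i = 0 ∧ j = l.length - 1) →
    ¬ G.rlAdj (l.get ⟨i, hi⟩) (l.get ⟨j, hj⟩)

/-- æ-acyclicity: no chordless æ-cycle. -/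
def AEAcyclic (G : RGB) : Prop :=
  ¬ ∃ l, G.IsAECycle l ∧ G.ChordlessCyc l

/-- MELL-correctness of an RGB-cograph. -/
def MELLCorrect (G : RGB) : Prop :=
  G.verts.Nonempty ∧ G.AEConnected ∧ G.AEAcyclic ∧
  (∀ w v v', G.lt w v → G.link v v' → ∃ w', G.link w' w ∧ G.lt w' v')

/-- MLL-correctness: MELL-correct and every vertex is atomic. -/
def MLLCorrect (G : RGB) : Prop :=
  G.MELLCorrect ∧ ∀ v ∈ G.verts, (G.lab v).isAtom

/-- MLLu-correctness: MELL-correct and every vertex is atomic, `1` or `∘`. -/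
def MLLuCorrect (G : RGB) : Prop :=
  G.MELLCorrect ∧
  ∀ v ∈ G.verts, (G.lab v).isAtom ∨ G.lab v = GLabel.one ∨ G.lab v = GLabel.hole

end RGB

/-! ## Fibrations -/

/-- No edge at all between `u` and `v` in the labeled graph `H`. -/
def LabGraph.noE (H : LabGraph) (u v : ℕ) : Prop := H.toMGraph.noEdge u v

/-- A linear fibration between labeled modal relation webs. -/
def IsLinearFib (G H : LabGraph) (f : ℕ → ℕ) : Prop :=
  (∀ v ∈ G.verts, f v ∈ H.verts) ∧
  -- (1) preservation of R and lt
  (∀ u v, u ∈ G.verts → v ∈ G.verts →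
    (G.R u v → H.R (f u) (f v)) ∧ (G.lt u v → H.lt (f u) (f v))) ∧
  -- (2) skew lifting
  (∀ v ∈ G.verts, ∀ w ∈ H.verts,
    (H.R w (f v) → ∃ u ∈ G.verts, G.R u v ∧ H.noE w (f u)) ∧
    (H.lt w (f v) → ∃ u ∈ G.verts, G.lt u v ∧ H.noE w (f u))) ∧
  -- (3) modality
  (∀ u v, u ∈ G.verts → v ∈ G.verts → u ≠ v → G.noE u v → H.lt (f u) (f v) →
    ∃ w ∈ G.verts, (G.lt w v ∧ f w = f u) ∨ (G.lt u w ∧ f w = f v)) ∧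
  -- (4) labels
  (∀ v ∈ G.verts,
    (G.lab v ≠ GLabel.hole → H.lab (f v) = G.lab v) ∧
    (G.lab v = GLabel.hole →
      H.lab (f v) = GLabel.hole ∨ H.lab (f v) = GLabel.bot ∨ H.lab (f v) = GLabel.quest)) ∧
  -- (5) ∘-domination
  (∀ w ∈ H.verts, (∀ v ∈ G.verts, f v ≠ w) →
    ∃ u ∈ G.verts, G.lab u = GLabel.hole ∧ H.lab (f u) = GLabel.quest ∧ H.lt (f u) w ∧
      ∀ v ∈ G.verts, (H.R (f v) (f u) ↔ H.R (f v) w) ∧ (H.lt (f v) (f u) ↔ H.lt (f v) w)) ∧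
  -- (6) ?-domination
  (∀ v₁ v₂, v₁ ∈ G.verts → v₂ ∈ G.verts → v₁ ≠ v₂ → f v₁ = f v₂ →
    ∃ w₁ w₂, w₁ ∈ G.verts ∧ w₂ ∈ G.verts ∧ w₁ ≠ w₂ ∧ f w₁ = f w₂ ∧
      H.lab (f w₁) = GLabel.quest ∧
      ((w₁ = v₁ ∧ w₂ = v₂) ∨ (G.lt w₁ v₁ ∧ G.lt w₂ v₂)))

/-- `v` and `w` are clones: every other vertex relates to them in the same way. -/
def Clones (G : LabGraph) (v w : ℕ) : Prop :=
  ∀ u ∈ G.verts, u ≠ v → u ≠ w →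
    (G.R u v ↔ G.R u w) ∧ (G.lt u v ↔ G.lt u w) ∧ (G.lt v u ↔ G.lt w u) ∧
    (G.noE u v ↔ G.noE u w)

/-- A ?-map between labeled modal relation webs. -/
def IsQMap (G H : LabGraph) (f : ℕ → ℕ) : Prop :=
  (∀ v ∈ G.verts, f v ∈ H.verts) ∧
  (∀ v w, v ∈ G.verts → w ∈ G.verts → v ≠ w → f v = f w →
    Clones G v w ∧ G.lt v w ∧ H.lab (f v) = G.lab w ∧
    (G.lab w = GLabel.quest ∨ G.lab w = GLabel.hole)) ∧
  (∀ v w, v ∈ G.verts → w ∈ G.verts → f v ≠ f w →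
    (G.R v w → H.R (f v) (f w)) ∧ (G.lt v w → H.lt (f v) (f w)) ∧
    (G.lt w v → H.lt (f w) (f v)) ∧ (G.noE v w → H.noE (f v) (f w))) ∧
  (∀ w ∈ H.verts, (∀ v ∈ G.verts, f v ≠ w) →
    H.lab w = GLabel.quest ∧ ∃ x, H.lt w x)

/-- A MELL-fibration: the composite of a ?-map followed by a linear fibration. -/
def IsMELLFib (G H : LabGraph) (f : ℕ → ℕ) : Prop :=
  ∃ (K : LabGraph) (g h : ℕ → ℕ),
    K.IsModalWeb ∧ IsQMap G K g ∧ IsLinearFib K H h ∧ ∀ v ∈ G.verts, f v = h (g v)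

/-- A MLLu-fibration: a MELL-fibration whose codomain has no `!` or `?` vertex. -/
def IsMLLuFib (G H : LabGraph) (f : ℕ → ℕ) : Prop :=
  IsMELLFib G H f ∧
  ∀ v ∈ H.verts, H.lab v ≠ GLabel.bang ∧ H.lab v ≠ GLabel.quest

/-- A MLL-fibration: a bijection whose codomain has no `!`, `?` or `∘` vertex. -/
def IsMLLFib (G H : LabGraph) (f : ℕ → ℕ) : Prop :=
  Set.BijOn f ↑G.verts ↑H.verts ∧
  ∀ v ∈ H.verts,
    H.lab v ≠ GLabel.bang ∧ H.lab v ≠ GLabel.quest ∧ H.lab v ≠ GLabel.hole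

/-- An allegiant map from an RGB-cograph to a labeled relation web. -/
def Allegiant (G : RGB) (H : LabGraph) (f : ℕ → ℕ) : Prop :=
  (∀ v w, v ∈ G.verts → w ∈ G.verts → G.link v w → v ≠ w →
    (G.lab v).isAtom → (G.lab w).isAtom →
    ∃ n : ℕ, (H.lab (f v) = GLabel.atom n ∧ H.lab (f w) = GLabel.natom n) ∨
             (H.lab (f v) = GLabel.natom n ∧ H.lab (f w) = GLabel.atom n)) ∧
  (∀ v ∈ G.verts, G.lab v ≠ GLabel.hole → H.lab (f v) = G.lab v) ∧
  (∀ v ∈ G.verts, G.lab v = GLabel.hole →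
    H.lab (f v) = GLabel.bot ∨ H.lab (f v) = GLabel.quest)

/-! ## Systems, correctness and combinatorial proofs, parametrized by X -/

inductive Sys where
  | MLL | MLLu | MELL

/-- Provability in the sequent system `X`. -/
def SysProv : Sys → Sequent → Prop
  | Sys.MLL  => ProvMLL
  | Sys.MLLu => ProvMLLu
  | Sys.MELL => ProvMELL

/-- Provability in the linear system `X^ℓ`. -/
def SysProvLin : Sys → Sequent → Prop
  | Sys.MLL  => ProvMLL
  | Sys.MLLu => ProvMLLuLin
  | Sys.MELL => ProvMELLLin

/-- The appropriate class of formulas for `X`: MELL-formulas for MELL; formulas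
without modalities for MLLu; formulas without modalities and without `∘` for MLL. -/
def SysForm : Sys → Formula → Prop
  | Sys.MLL  => fun F => F.noMod ∧ F.isMELL
  | Sys.MLLu => Formula.noMod
  | Sys.MELL => Formula.isMELL

/-- `X`-correctness of RGB-cographs. -/
def SysCorrect : Sys → RGB → Prop
  | Sys.MLL  => RGB.MLLCorrect
  | Sys.MLLu => RGB.MLLuCorrect
  | Sys.MELL => RGB.MELLCorrect

/-- `X`-fibrations. -/
def SysFib : Sys → LabGraph → LabGraph → (ℕ → ℕ) → Prop
  | Sys.MLL  => IsMLLFib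
  | Sys.MLLu => IsMLLuFib
  | Sys.MELL => IsMELLFib

/-- An `X`-combinatorial proof with conclusion graph `H`: an allegiant `X`-fibration
from an `X`-correct RGB-cograph. -/
def IsCombProof (X : Sys) (G : RGB) (f : ℕ → ℕ) (H : LabGraph) : Prop :=
  G.IsRGB ∧ SysCorrect X G ∧ Allegiant G H f ∧ SysFib X G.toLabGraph H f


/-! Reading `∘` as `⊥` turns an MLLu^j-proof into an MLLu-proof: each placeholder of a jump
axiom becomes a `⊥`-rule and `⊥^j` disappears. Conversely `∘`-weakening is admissible in
MLLu^j, so the `⊥`-rule of MLLu is `⊥^j` applied after weakening by `∘`. -/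

namespace Formula

def holeToBot : Formula → Formula
  | atom a   => atom a
  | natom a  => natom a
  | parr A B => parr A.holeToBot B.holeToBot
  | tens A B => tens A.holeToBot B.holeToBot
  | bang A   => bang A.holeToBot
  | quest A  => quest A.holeToBot
  | bot      => bot
  | one      => one
  | hole     => bot

theorem isMLLu.isMELL : ∀ {F : Formula}, F.isMLLu → F.isMELL
  | atom _, _ | natom _, _ | bot, _ | one, _ => trivial
  | parr _ _, ⟨hA, hB⟩ | tens _ _, ⟨hA, hB⟩ => ⟨hA.isMELL, hB.isMELL⟩

theorem holeToBot_of_isMELL : ∀ {F : Formula}, F.isMELL → F.holeToBot = F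
  | atom _, _ | natom _, _ | bot, _ | one, _ => rfl
  | parr _ _, ⟨hA, hB⟩ | tens _ _, ⟨hA, hB⟩ => by
    simp only [holeToBot, holeToBot_of_isMELL hA, holeToBot_of_isMELL hB]
  | bang A, h | quest A, h => by rw [holeToBot, holeToBot_of_isMELL (F := A) h]

end Formula

open Formula

theorem ProvMLLu.add_replicate_bot {Γ : Sequent} (h : ProvMLLu Γ) :
    ∀ n, ProvMLLu (Γ + Multiset.replicate n Formula.bot)
  | 0 => by simpa using h
  | n + 1 => by
    simpa [Multiset.replicate_succ] using ProvMLLu.bot _ (h.add_replicate_bot n)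

theorem ProvMLLuj.map_holeToBot {Γ : Sequent} (h : ProvMLLuj Γ) :
    ProvMLLu (Γ.map holeToBot) := by
  induction h with
  | axj a n =>
    simpa [holeToBot, Multiset.map_replicate, Multiset.singleton_add]
      using (ProvMLLu.ax a).add_replicate_bot n
  | onej n =>
    simpa [holeToBot, Multiset.map_replicate, Multiset.singleton_add]
      using ProvMLLu.one.add_replicate_bot n
  | botj _ _ ih => simpa [holeToBot] using ih
  | parr _ _ _ _ ih =>
    simp only [Multiset.map_cons, holeToBot] at ih ⊢
    exact ProvMLLu.parr _ _ _ ih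
  | tens _ _ _ _ _ _ ih₁ ih₂ =>
    simp only [Multiset.map_cons, Multiset.map_add, holeToBot] at ih₁ ih₂ ⊢
    exact ProvMLLu.tens _ _ _ _ ih₁ ih₂

theorem ProvMLLuj.cons_hole {Γ : Sequent} (h : ProvMLLuj Γ) : ProvMLLuj (hole ::ₘ Γ) := by
  induction h with
  | axj a n =>
    simpa [Multiset.replicate_succ, Multiset.cons_swap] using ProvMLLuj.axj a (n + 1)
  | onej n =>
    simpa [Multiset.replicate_succ, Multiset.cons_swap] using ProvMLLuj.onej (n + 1)
  | botj _ _ ih =>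
    rw [Multiset.cons_swap] at ih ⊢
    exact ProvMLLuj.botj _ ih
  | parr _ _ B _ ih =>
    rw [Multiset.cons_swap, Multiset.cons_swap hole B] at ih
    rw [Multiset.cons_swap]
    exact ProvMLLuj.parr _ _ _ ih
  | tens _ _ _ _ _ h₂ ih₁ _ =>
    rw [Multiset.cons_swap] at ih₁
    simpa [Multiset.cons_swap] using ProvMLLuj.tens _ _ _ _ ih₁ h₂

theorem ProvMLLu.toMLLuj {Γ : Sequent} (h : ProvMLLu Γ) : ProvMLLuj Γ := by
  induction h with
  | ax a => simpa using ProvMLLuj.axj a 0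
  | parr _ _ _ _ ih => exact ProvMLLuj.parr _ _ _ ih
  | tens _ _ _ _ _ _ ih₁ ih₂ => exact ProvMLLuj.tens _ _ _ _ ih₁ ih₂
  | bot _ _ ih => exact ProvMLLuj.botj _ ih.cons_hole
  | one => simpa using ProvMLLuj.onej 0

/-- For every formula `F` of multiplicative linear logic with units,
`F` is provable in MLLu if and only if `F` is provable in MLLu^j. -/
theorem mllu_iff_mlluj (F : Formula) (hF : F.isMLLu) :
    ProvMLLu {F} ↔ ProvMLLuj {F} := by
  refine ⟨ProvMLLu.toMLLuj, fun h => ?_⟩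
  simpa [holeToBot_of_isMELL hF.isMELL] using h.map_holeToBot
end

section
/- If a MELL-formula F is provable in the sequent system MELL, then there exist formulas F′, F″, F‴ such that F′ is provable in MELL^ℓ, F″ is derivable from F′ using only the deep dereliction, deep digging and deep ∘-digging rules, F‴ is derivable from F″ using only the deep weakening and deep ⊥ rules, and F is derivable from F‴ using only the deep contraction rule. -/
/-!
Translate a MELL proof into a MELL^ℓ proof rule by rule, postponing the non-linear rules.
A dereliction becomes a deep dereliction. A weakening or `⊥` leaves a placeholder `∘` in an
axiom or `1` leaf; every weak promotion below wraps it in one more `?`, and digging and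
`∘`-digging turn `?ⁿ∘` back into `∘`, which deep weakening or deep `⊥` then replaces. The `?`s
that weak promotion puts on its context are removed by digging. A contraction of `?A, ?A` keeps
both premises side by side, to be joined by `⅋` and contracted deeply by `?A ⅋ ?A → ?A`.
So a formula `D` of the MELL sequent is represented by a list of formulas of the MELL^ℓ
sequent (of length > 1 only if `D` is a `?`-formula), joined by `⅋` only when `D` becomes a
proper subformula.
-/

namespace Formula

theorem questN_quest (n : ℕ) (A : Formula) : questN n (quest A) = questN (n + 1) A := by
  induction n with
  | zero => rfl
  | succ n ih => exact congrArg quest ih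

/-- Right-nested `⅋` of a list; its value `∘` on `[]` is junk. -/
def parrOf : List Formula → Formula
  | [] => hole
  | [a] => a
  | a :: b :: l => parr a (parrOf (b :: l))

end Formula

open Formula

section FormDeriv

variable {r : Formula → Formula → Prop} {A A' B B' : Formula}

theorem FormDeriv.quest (h : FormDeriv r A B) :
    FormDeriv r (Formula.quest A) (Formula.quest B) :=
  Relation.ReflTransGen.lift Formula.quest (fun _ _ => Deep.quest) _ _ h

theorem FormDeriv.bang (h : FormDeriv r A B) : FormDeriv r (Formula.bang A) (Formula.bang B) :=
  Relation.ReflTransGen.lift Formula.bang (fun _ _ => Deep.bang) _ _ h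

theorem FormDeriv.parr (h : FormDeriv r A B) (h' : FormDeriv r A' B') :
    FormDeriv r (Formula.parr A A') (Formula.parr B B') :=
  (Relation.ReflTransGen.lift (Formula.parr · A') (fun _ _ => Deep.parrL A') _ _ h).trans
    (Relation.ReflTransGen.lift (Formula.parr B) (fun _ _ => Deep.parrR B) _ _ h')

theorem FormDeriv.tens (h : FormDeriv r A B) (h' : FormDeriv r A' B') :
    FormDeriv r (Formula.tens A A') (Formula.tens B B') :=
  (Relation.ReflTransGen.lift (Formula.tens · A') (fun _ _ => Deep.tensL A') _ _ h).trans
    (Relation.ReflTransGen.lift (Formula.tens B) (fun _ _ => Deep.tensR B) _ _ h')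

end FormDeriv

theorem formDeriv_digBase_questN_quest :
    ∀ (n : ℕ) (A : Formula), FormDeriv DigBase (questN n A) (quest A)
  | 0, A => .single (.base (.der A))
  | 1, _ => .refl
  | n + 2, A => .head (.base (.dig (questN n A))) (formDeriv_digBase_questN_quest (n + 1) A)

theorem formDeriv_digBase_questN_hole (n : ℕ) : FormDeriv DigBase (questN n hole) hole :=
  (formDeriv_digBase_questN_quest n hole).tail (.base .digHole)

def FineDeriv (A D : Formula) : Prop :=
  ∃ B C, FormDeriv DigBase A B ∧ FormDeriv WeakBase B C ∧ FormDeriv ContrBase C D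

namespace FineDeriv

variable {A A' D D' X Y : Formula}

theorem refl (A : Formula) : FineDeriv A A :=
  ⟨A, A, .refl, .refl, .refl⟩

theorem bang (h : FineDeriv A D) : FineDeriv (Formula.bang A) (Formula.bang D) :=
  let ⟨_, _, h₁, h₂, h₃⟩ := h
  ⟨_, _, h₁.bang, h₂.bang, h₃.bang⟩

theorem parr (h : FineDeriv A D) (h' : FineDeriv A' D') :
    FineDeriv (Formula.parr A A') (Formula.parr D D') :=
  let ⟨_, _, h₁, h₂, h₃⟩ := h
  let ⟨_, _, h₁', h₂', h₃'⟩ := h'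
  ⟨_, _, h₁.parr h₁', h₂.parr h₂', h₃.parr h₃'⟩

theorem tens (h : FineDeriv A D) (h' : FineDeriv A' D') :
    FineDeriv (Formula.tens A A') (Formula.tens D D') :=
  let ⟨_, _, h₁, h₂, h₃⟩ := h
  let ⟨_, _, h₁', h₂', h₃'⟩ := h'
  ⟨_, _, h₁.tens h₁', h₂.tens h₂', h₃.tens h₃'⟩

theorem trans_contrBase (h : FineDeriv A X) (h' : FormDeriv ContrBase X Y) : FineDeriv A Y :=
  let ⟨B, C, h₁, h₂, h₃⟩ := h
  ⟨B, C, h₁, h₂, h₃.trans h'⟩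

theorem questN_hole_bot (n : ℕ) : FineDeriv (questN n hole) bot :=
  ⟨hole, bot, formDeriv_digBase_questN_hole n, .single (.base .bot), .refl⟩

theorem parrOf_quest {G : Formula} :
    ∀ {L : List Formula}, (∀ a ∈ L, FineDeriv a (quest G)) → L ≠ [] →
      FineDeriv (parrOf L) (quest G)
  | [a], hL, _ => hL a (by simp)
  | a :: b :: l, hL, _ =>
    ((hL a (by simp)).parr (parrOf_quest (fun c hc => hL c (by simp_all)) (by simp)))
      |>.trans_contrBase (.single (.base (.contr G)))

end FineDeriv

/-- The invariant for representatives of a `?`-formula, since weak promotions below may put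
any number of `?`s on them. -/
def FineDerivQuestN (A D : Formula) : Prop :=
  ∀ n, FineDeriv (questN n A) D

theorem FineDeriv.fineDerivQuestN_quest {A D : Formula} (h : FineDeriv A D) :
    FineDerivQuestN A (quest D) := fun n =>
  let ⟨B, C, h₁, h₂, h₃⟩ := h
  ⟨quest B, quest C, (formDeriv_digBase_questN_quest n A).trans h₁.quest, h₂.quest, h₃.quest⟩

theorem FineDerivQuestN.quest {A D : Formula} (h : FineDerivQuestN A D) :
    FineDerivQuestN (quest A) D := fun n =>
  questN_quest n A ▸ h (n + 1)

theorem fineDerivQuestN_questN_hole (m : ℕ) (A : Formula) :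
    FineDerivQuestN (questN m hole) (quest A) := fun n =>
  ⟨hole, quest A,
    (formDeriv_digBase_questN_quest n _).trans (formDeriv_digBase_questN_hole (m + 1)),
    .single (.base (.weak A)), .refl⟩

def Linearizes (L : List Formula) : Formula → Prop
  | quest G => L ≠ [] ∧ ∀ a ∈ L, FineDerivQuestN a (quest G)
  | D => ∃ a, L = [a] ∧ FineDeriv a D

namespace Linearizes

variable {L L' : List Formula} {A D : Formula}

theorem ne_nil (h : Linearizes L D) : L ≠ [] := by
  cases D <;> first | exact h.1 | (obtain ⟨_, rfl, _⟩ := h; simp)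

theorem fineDeriv_of_mem (h : Linearizes L D) (ha : A ∈ L) : FineDeriv A D := by
  cases D <;> first
    | exact h.2 A ha 0
    | (obtain ⟨a, rfl, h⟩ := h; rwa [List.mem_singleton.mp ha])

theorem fineDeriv_parrOf (h : Linearizes L D) : FineDeriv (parrOf L) D := by
  cases D <;> first
    | exact FineDeriv.parrOf_quest (fun a ha => h.fineDeriv_of_mem ha) h.ne_nil
    | (obtain ⟨a, rfl, h⟩ := h; exact h)

theorem quest (h : Linearizes L D) : Linearizes L (quest D) :=
  ⟨h.ne_nil, fun _ ha => (h.fineDeriv_of_mem ha).fineDerivQuestN_quest⟩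

theorem append (h : Linearizes L (Formula.quest A)) (h' : Linearizes L' (Formula.quest A)) :
    Linearizes (L ++ L') (Formula.quest A) :=
  ⟨by simp [h.1], fun a ha => (List.mem_append.mp ha).elim (h.2 a) (h'.2 a)⟩

theorem map_quest (h : Linearizes L (Formula.quest A)) :
    Linearizes (L.map Formula.quest) (Formula.quest A) :=
  ⟨by simpa using h.1, by simpa using fun a ha => (h.2 a ha).quest⟩

end Linearizes

namespace ProvMELLLin

theorem parrOf {Γ : Sequent} :
    ∀ {L : List Formula}, L ≠ [] → ProvMELLLin (↑L + Γ) → ProvMELLLin (Formula.parrOf L ::ₘ Γ)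
  | [_], _, h => by simpa [Formula.parrOf] using h
  | a :: b :: l, _, h => by
    have h' := parrOf (Γ := a ::ₘ Γ) (L := b :: l) (by simp)
      (by simpa [← Multiset.cons_coe, Multiset.add_cons] using h)
    exact .parr Γ a _ (by rwa [Multiset.cons_swap] at h')

theorem exists_questN_hole_cons {Γ : Sequent} (h : ProvMELLLin Γ) :
    ∃ n, ProvMELLLin (questN n hole ::ₘ Γ) := by
  induction h with
  | axj a n =>
    refine ⟨0, ?_⟩
    simpa [questN, Multiset.replicate_succ, Multiset.cons_swap] using axj a (n + 1)
  | onej n =>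
    refine ⟨0, ?_⟩
    simpa [questN, Multiset.replicate_succ, Multiset.cons_swap] using onej (n + 1)
  | parr Γ A B _ ih =>
    obtain ⟨n, hn⟩ := ih
    refine ⟨n, ?_⟩
    have := parr (questN n hole ::ₘ Γ) A B (by simpa [Multiset.cons_swap] using hn)
    simpa [Multiset.cons_swap] using this
  | tens Γ Δ A B _ hB ih =>
    obtain ⟨n, hn⟩ := ih
    refine ⟨n, ?_⟩
    have := tens (questN n hole ::ₘ Γ) Δ A B (by simpa [Multiset.cons_swap] using hn) hB
    simpa [Multiset.cons_swap] using this
  | wprom Γ A _ ih =>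
    obtain ⟨n, hn⟩ := ih
    refine ⟨n + 1, ?_⟩
    have := wprom (questN n hole ::ₘ Γ) A (by simpa [Multiset.cons_swap] using hn)
    simpa [questN, Multiset.cons_swap] using this

end ProvMELLLin

def HasLinearization (Γ : Sequent) : Prop :=
  ∃ S : Multiset (List Formula), ProvMELLLin (S.bind Multiset.ofList) ∧ Multiset.Rel Linearizes S Γ

namespace HasLinearization

variable {Γ Δ : Sequent} {A B : Formula}

theorem ax (a : ℕ) : HasLinearization {atom a, natom a} :=
  ⟨{[atom a], [natom a]}, by simpa using ProvMELLLin.axj a 0,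
    .cons ⟨_, rfl, .refl _⟩ (.cons ⟨_, rfl, .refl _⟩ .zero)⟩

theorem one : HasLinearization {Formula.one} :=
  ⟨{[Formula.one]}, by simpa using ProvMELLLin.onej 0, .cons ⟨_, rfl, .refl _⟩ .zero⟩

theorem parr (h : HasLinearization (A ::ₘ B ::ₘ Γ)) : HasLinearization (parr A B ::ₘ Γ) := by
  obtain ⟨S, hS, hrel⟩ := h
  obtain ⟨LA, S, hA, hBΓ, rfl⟩ := Multiset.rel_cons_right.mp hrel
  obtain ⟨LB, S, hB, hΓ, rfl⟩ := Multiset.rel_cons_right.mp hBΓ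
  refine ⟨[.parr (parrOf LA) (parrOf LB)] ::ₘ S, ?_,
    .cons ⟨_, rfl, hA.fineDeriv_parrOf.parr hB.fineDeriv_parrOf⟩ hΓ⟩
  have hA' := ProvMELLLin.parrOf hA.ne_nil (by simpa using hS)
  have hB' := ProvMELLLin.parrOf hB.ne_nil (by rw [Multiset.add_cons]; exact hA')
  simpa using ProvMELLLin.parr _ _ _ (by rwa [Multiset.cons_swap] at hB')

theorem tens (h : HasLinearization (A ::ₘ Γ)) (h' : HasLinearization (B ::ₘ Δ)) :
    HasLinearization (tens A B ::ₘ (Γ + Δ)) := by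
  obtain ⟨S, hS, hrel⟩ := h
  obtain ⟨LA, S, hA, hΓ, rfl⟩ := Multiset.rel_cons_right.mp hrel
  obtain ⟨T, hT, hrel'⟩ := h'
  obtain ⟨LB, T, hB, hΔ, rfl⟩ := Multiset.rel_cons_right.mp hrel'
  refine ⟨[.tens (parrOf LA) (parrOf LB)] ::ₘ (S + T), ?_,
    .cons ⟨_, rfl, hA.fineDeriv_parrOf.tens hB.fineDeriv_parrOf⟩ (hΓ.add hΔ)⟩
  have := ProvMELLLin.tens _ _ _ _ (ProvMELLLin.parrOf hA.ne_nil (by simpa using hS))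
    (ProvMELLLin.parrOf hB.ne_nil (by simpa using hT))
  simpa using this

theorem cons_of_questN_hole (h : HasLinearization Γ) (hD : ∀ n, Linearizes [questN n hole] D) :
    HasLinearization (D ::ₘ Γ) := by
  obtain ⟨S, hS, hrel⟩ := h
  obtain ⟨n, hn⟩ := hS.exists_questN_hole_cons
  exact ⟨[questN n hole] ::ₘ S, by simpa using hn, .cons (hD n) hrel⟩

theorem bot (h : HasLinearization Γ) : HasLinearization (bot ::ₘ Γ) :=
  h.cons_of_questN_hole fun n => ⟨_, rfl, .questN_hole_bot n⟩

theorem weak (h : HasLinearization Γ) : HasLinearization (quest A ::ₘ Γ) :=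
  h.cons_of_questN_hole fun n => ⟨by simp, by simpa using fineDerivQuestN_questN_hole n A⟩

theorem der (h : HasLinearization (A ::ₘ Γ)) : HasLinearization (quest A ::ₘ Γ) := by
  obtain ⟨S, hS, hrel⟩ := h
  obtain ⟨LA, S, hA, hΓ, rfl⟩ := Multiset.rel_cons_right.mp hrel
  exact ⟨LA ::ₘ S, hS, .cons hA.quest hΓ⟩

theorem contr (h : HasLinearization (quest A ::ₘ quest A ::ₘ Γ)) :
    HasLinearization (quest A ::ₘ Γ) := by
  obtain ⟨S, hS, hrel⟩ := h
  obtain ⟨L, S, hL, hAΓ, rfl⟩ := Multiset.rel_cons_right.mp hrel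
  obtain ⟨L', S, hL', hΓ, rfl⟩ := Multiset.rel_cons_right.mp hAΓ
  exact ⟨(L ++ L') ::ₘ S, by simpa [← Multiset.coe_add, add_assoc] using hS,
    .cons (hL.append hL') hΓ⟩

theorem prom (h : HasLinearization (A ::ₘ Γ.map Formula.quest)) :
    HasLinearization (bang A ::ₘ Γ.map Formula.quest) := by
  obtain ⟨S, hS, hrel⟩ := h
  obtain ⟨LA, S, hA, hΓ, rfl⟩ := Multiset.rel_cons_right.mp hrel
  refine ⟨[.bang (parrOf LA)] ::ₘ S.map (List.map Formula.quest), ?_,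
    .cons ⟨_, rfl, hA.fineDeriv_parrOf.bang⟩ ?_⟩
  · have := ProvMELLLin.wprom _ _ (ProvMELLLin.parrOf hA.ne_nil (by simpa using hS))
    simpa [Multiset.bind_map, Multiset.map_bind] using this
  · exact Multiset.rel_map.mpr ((Multiset.rel_map_right.mp hΓ).mono fun _ _ _ _ => .map_quest)

end HasLinearization

theorem ProvMELL.hasLinearization {Γ : Sequent} (h : ProvMELL Γ) : HasLinearization Γ := by
  induction h with
  | ax a => exact .ax a
  | parr _ _ _ _ ih => exact ih.parr
  | tens _ _ _ _ _ _ ih ih' => exact ih.tens ih'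
  | bot _ _ ih => exact ih.bot
  | one => exact .one
  | prom _ _ _ ih => exact ih.prom
  | der _ _ _ ih => exact ih.der
  | weak _ _ _ ih => exact ih.weak
  | contr _ _ _ ih => exact ih.contr

theorem mell_fine_decomposition_general (F : Formula) (h : ProvMELL {F}) :
    ∃ F₁ F₂ F₃ : Formula,
      ProvMELLLin {F₁} ∧
      FormDeriv DigBase F₁ F₂ ∧
      FormDeriv WeakBase F₂ F₃ ∧
      FormDeriv ContrBase F₃ F := by
  obtain ⟨S, hS, hrel⟩ := h.hasLinearization
  obtain ⟨L, S, hL, hS₀, rfl⟩ := Multiset.rel_cons_right.mp hrel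
  obtain rfl := Multiset.rel_zero_right.mp hS₀
  obtain ⟨F₂, F₃, h₁, h₂, h₃⟩ := hL.fineDeriv_parrOf
  exact ⟨parrOf L, F₂, F₃, ProvMELLLin.parrOf hL.ne_nil (by simpa using hS), h₁, h₂, h₃⟩

/-- If a MELL-formula `F` is provable in MELL, then there are formulas
`F1`, `F2`, `F3` with `F1` provable in MELL^l, `F2` derivable from `F1` by deep
dereliction/digging/hole-digging, `F3` derivable from `F2` by deep weakening and deep
bottom, and `F` derivable from `F3` by deep contraction. -/
theorem mell_fine_decomposition (F : Formula) (hF : F.isMELL) (h : ProvMELL {F}) :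
    ∃ F₁ F₂ F₃ : Formula,
      ProvMELLLin {F₁} ∧
      FormDeriv DigBase F₁ F₂ ∧
      FormDeriv WeakBase F₂ F₃ ∧
      FormDeriv ContrBase F₃ F :=
  mell_fine_decomposition_general F h
end

section
/- A mixed graph is a relation web if and only if it can be constructed from single-vertex graphs using the three operations ⅋, ◁ and ⊗. -/
/-!
In `G ⅋ H`, `G ⊗ H` and `G ◁ H` all pairs across the two sides have the same kind (no edge, an
`R`-edge, a `<`-edge), whereas each forbidden configuration (an induced `P₄` in `R`, an induced `N`
in `<`, a 3-colour triangle) stays connected through its pairs of either of the other two kinds.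
So no forbidden configuration straddles the two sides, and gluing relation webs gives a relation
web.

Conversely, colour every pair of vertices of a relation web by its kind. There is no rainbow
triangle, and no induced `P₄` whose edges all have kind `R`, or all have kind `<` (a path of
comparabilities contains an `N`). Adding the vertices one at a time, these two facts split every
set of at least two vertices into two nonempty parts with all pairs across of one kind; when that
kind is `<`, the components of the incomparability graph are linearly ordered, which makes all the
arrows across point the same way. By induction on the number of vertices the two parts are
constructible, and the web is their `⅋`, `⊗` or `◁`.
-/

structure IsSplit (V A B : Finset ℕ) (r : ℕ → ℕ → Prop) : Prop where
  left_nonempty : A.Nonempty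
  right_nonempty : B.Nonempty
  disjoint : Disjoint A B
  union_eq : A ∪ B = V
  rel : ∀ a ∈ A, ∀ b ∈ B, r a b

namespace IsSplit

variable {V A B : Finset ℕ} {r s : ℕ → ℕ → Prop} {v : ℕ}

theorem left_subset (h : IsSplit V A B r) : A ⊆ V := h.union_eq ▸ Finset.subset_union_left

theorem right_subset (h : IsSplit V A B r) : B ⊆ V := h.union_eq ▸ Finset.subset_union_right

theorem card_left_lt (h : IsSplit V A B r) : A.card < V.card := by
  rw [← h.union_eq, Finset.card_union_of_disjoint h.disjoint]
  have := h.right_nonempty.card_pos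
  omega

theorem card_right_lt (h : IsSplit V A B r) : B.card < V.card := by
  rw [← h.union_eq, Finset.card_union_of_disjoint h.disjoint]
  have := h.left_nonempty.card_pos
  omega

theorem mono (h : IsSplit V A B r) (hrs : ∀ a b, r a b → s a b) : IsSplit V A B s :=
  ⟨h.left_nonempty, h.right_nonempty, h.disjoint, h.union_eq,
    fun a ha b hb => hrs a b (h.rel a ha b hb)⟩

theorem symm (h : IsSplit V A B r) (hr : ∀ a b, r a b → r b a) : IsSplit V B A r :=
  ⟨h.right_nonempty, h.left_nonempty, h.disjoint.symm, Finset.union_comm B A ▸ h.union_eq,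
    fun b hb a ha => hr a b (h.rel a ha b hb)⟩

theorem insert_left (h : IsSplit V A B r) (hv : v ∉ V) (hvB : ∀ b ∈ B, r v b) :
    IsSplit (insert v V) (insert v A) B r where
  left_nonempty := Finset.insert_nonempty v A
  right_nonempty := h.right_nonempty
  disjoint := Finset.disjoint_insert_left.2 ⟨fun hb => hv (h.right_subset hb), h.disjoint⟩
  union_eq := by rw [Finset.insert_union, h.union_eq]
  rel a ha b hb := by
    rcases Finset.mem_insert.1 ha with rfl | ha
    · exact hvB b hb
    · exact h.rel a ha b hb

end IsSplit

namespace MGraph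

variable {G H K : MGraph} {S : Finset ℕ} {u v w x y z : ℕ}

theorem IsMixed.R_symm (hG : G.IsMixed) (h : G.R u v) : G.R v u := hG.1 u v h

theorem IsMixed.not_R_self (hG : G.IsMixed) (v : ℕ) : ¬ G.R v v := hG.2.1 v

theorem IsMixed.not_lt_self (hG : G.IsMixed) (v : ℕ) : ¬ G.lt v v := hG.2.2.1 v

theorem IsMixed.not_R_of_lt (hG : G.IsMixed) (h : G.lt u v) : ¬ G.R u v :=
  fun hR => hG.2.2.2.1 u v ⟨hR, h⟩

theorem IsMixed.mem_of_R (hG : G.IsMixed) (h : G.R u v) : u ∈ G.verts ∧ v ∈ G.verts :=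
  hG.2.2.2.2.1 u v h

theorem IsMixed.mem_of_lt (hG : G.IsMixed) (h : G.lt u v) : u ∈ G.verts ∧ v ∈ G.verts :=
  hG.2.2.2.2.2 u v h

def IsInducedP4 (G : MGraph) (w x y z : ℕ) : Prop :=
  w ≠ x ∧ w ≠ y ∧ w ≠ z ∧ x ≠ y ∧ x ≠ z ∧ y ≠ z ∧
    G.R w x ∧ G.R x y ∧ G.R y z ∧ ¬ G.R w y ∧ ¬ G.R w z ∧ ¬ G.R x z

def IsInducedN (G : MGraph) (u v y z : ℕ) : Prop :=
  u ≠ v ∧ u ≠ y ∧ u ≠ z ∧ v ≠ y ∧ v ≠ z ∧ y ≠ z ∧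
    G.lt u v ∧ G.lt y v ∧ G.lt y z ∧
    ¬ G.lt u y ∧ ¬ G.lt y u ∧ ¬ G.lt u z ∧ ¬ G.lt z u ∧ ¬ G.lt v z ∧ ¬ G.lt z v

def IsTricolor (G : MGraph) (u w v : ℕ) : Prop :=
  u ≠ w ∧ u ≠ v ∧ w ≠ v ∧ G.noEdge u w ∧ G.R w v ∧ (G.lt u v ∨ G.lt v u)

theorem IsRelWeb.lt_trans (hG : G.IsRelWeb) (h₁ : G.lt u v) (h₂ : G.lt v w) : G.lt u w :=
  hG.2.2.1 u v w h₁ h₂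

theorem IsRelWeb.not_isInducedP4 (hG : G.IsRelWeb) (hw : w ∈ G.verts) (hx : x ∈ G.verts)
    (hy : y ∈ G.verts) (hz : z ∈ G.verts) : ¬ G.IsInducedP4 w x y z :=
  fun h => hG.2.2.2.1 ⟨w, x, y, z, hw, hx, hy, hz, h⟩

theorem IsRelWeb.not_isInducedN (hG : G.IsRelWeb) (hu : u ∈ G.verts) (hv : v ∈ G.verts)
    (hy : y ∈ G.verts) (hz : z ∈ G.verts) : ¬ G.IsInducedN u v y z :=
  fun h => hG.2.2.2.2.1 ⟨u, v, y, z, hu, hv, hy, hz, h⟩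

theorem IsRelWeb.not_isTricolor (hG : G.IsRelWeb) (hu : u ∈ G.verts) (hw : w ∈ G.verts)
    (hv : v ∈ G.verts) : ¬ G.IsTricolor u w v :=
  fun h => hG.2.2.2.2.2 ⟨u, w, v, hu, hw, hv, h⟩

theorem IsRelWeb.mk' (hmix : G.IsMixed) (hne : G.verts.Nonempty)
    (htrans : ∀ u v w, G.lt u v → G.lt v w → G.lt u w)
    (hP4 : ∀ w ∈ G.verts, ∀ x ∈ G.verts, ∀ y ∈ G.verts, ∀ z ∈ G.verts, ¬ G.IsInducedP4 w x y z)
    (hN : ∀ u ∈ G.verts, ∀ v ∈ G.verts, ∀ y ∈ G.verts, ∀ z ∈ G.verts, ¬ G.IsInducedN u v y z)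
    (hT : ∀ u ∈ G.verts, ∀ w ∈ G.verts, ∀ v ∈ G.verts, ¬ G.IsTricolor u w v) :
    G.IsRelWeb :=
  ⟨hmix, hne, htrans, fun ⟨w, x, y, z, hw, hx, hy, hz, h⟩ => hP4 w hw x hx y hy z hz h,
    fun ⟨u, v, y, z, hu, hv, hy, hz, h⟩ => hN u hu v hv y hy z hz h,
    fun ⟨u, w, v, hu, hw, hv, h⟩ => hT u hu w hw v hv h⟩

def AgreeOn (K G : MGraph) (S : Finset ℕ) : Prop :=
  ∀ u ∈ S, ∀ v ∈ S, (K.R u v ↔ G.R u v) ∧ (K.lt u v ↔ G.lt u v)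

theorem AgreeOn.R_iff (h : AgreeOn K G S) (hu : u ∈ S) (hv : v ∈ S) : K.R u v ↔ G.R u v :=
  (h u hu v hv).1

theorem AgreeOn.lt_iff (h : AgreeOn K G S) (hu : u ∈ S) (hv : v ∈ S) : K.lt u v ↔ G.lt u v :=
  (h u hu v hv).2

theorem AgreeOn.not_isInducedP4 (h : AgreeOn K G S) (hG : G.IsRelWeb) (hS : S ⊆ G.verts)
    (hw : w ∈ S) (hx : x ∈ S) (hy : y ∈ S) (hz : z ∈ S) : ¬ K.IsInducedP4 w x y z := by
  rw [show K.IsInducedP4 w x y z ↔ G.IsInducedP4 w x y z by simp only [IsInducedP4, h.R_iff, *]]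
  exact hG.not_isInducedP4 (hS hw) (hS hx) (hS hy) (hS hz)

theorem AgreeOn.not_isInducedN (h : AgreeOn K G S) (hG : G.IsRelWeb) (hS : S ⊆ G.verts)
    (hu : u ∈ S) (hv : v ∈ S) (hy : y ∈ S) (hz : z ∈ S) : ¬ K.IsInducedN u v y z := by
  rw [show K.IsInducedN u v y z ↔ G.IsInducedN u v y z by simp only [IsInducedN, h.lt_iff, *]]
  exact hG.not_isInducedN (hS hu) (hS hv) (hS hy) (hS hz)

theorem AgreeOn.not_isTricolor (h : AgreeOn K G S) (hG : G.IsRelWeb) (hS : S ⊆ G.verts)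
    (hu : u ∈ S) (hw : w ∈ S) (hv : v ∈ S) : ¬ K.IsTricolor u w v := by
  rw [show K.IsTricolor u w v ↔ G.IsTricolor u w v by
    simp only [IsTricolor, noEdge, h.R_iff, h.lt_iff, *]]
  exact hG.not_isTricolor (hS hu) (hS hw) (hS hv)

@[simps]
def restrict (G : MGraph) (A : Finset ℕ) : MGraph where
  verts := A
  R u v := G.R u v ∧ u ∈ A ∧ v ∈ A
  lt u v := G.lt u v ∧ u ∈ A ∧ v ∈ A

theorem IsMixed.restrict (hG : G.IsMixed) (A : Finset ℕ) : (G.restrict A).IsMixed := by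
  unfold IsMixed at *
  simp only [restrict_R, restrict_lt, restrict_verts]
  grind

theorem IsRelWeb.restrict (hG : G.IsRelWeb) {A : Finset ℕ} (hAG : A ⊆ G.verts)
    (hA : A.Nonempty) : (G.restrict A).IsRelWeb := by
  have h : AgreeOn (G.restrict A) G A := fun u hu v hv => by simp [hu, hv]
  exact IsRelWeb.mk' (hG.1.restrict A) hA
    (fun u v w h₁ h₂ => ⟨hG.lt_trans h₁.1 h₂.1, h₁.2.1, h₂.2.2⟩)
    (fun w hw x hx y hy z hz => h.not_isInducedP4 hG hAG hw hx hy hz)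
    (fun u hu v hv y hy z hz => h.not_isInducedN hG hAG hu hv hy hz)
    (fun u hu w hw v hv => h.not_isTricolor hG hAG hu hw hv)

theorem IsRelWeb.of_glue (hG : G.IsRelWeb) (hH : H.IsRelWeb) (hKv : K.verts = G.verts ∪ H.verts)
    (hKG : AgreeOn K G G.verts) (hKH : AgreeOn K H H.verts) (hmix : K.IsMixed)
    (htrans : ∀ u v w, K.lt u v → K.lt v w → K.lt u w)
    (hP4 : ∀ w x y z, K.IsInducedP4 w x y z →
      (x ∈ G.verts ↔ w ∈ G.verts) ∧ (y ∈ G.verts ↔ w ∈ G.verts) ∧ (z ∈ G.verts ↔ w ∈ G.verts))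
    (hN : ∀ u v y z, K.IsInducedN u v y z →
      (v ∈ G.verts ↔ u ∈ G.verts) ∧ (y ∈ G.verts ↔ u ∈ G.verts) ∧ (z ∈ G.verts ↔ u ∈ G.verts))
    (hT : ∀ u w v, K.IsTricolor u w v →
      (w ∈ G.verts ↔ u ∈ G.verts) ∧ (v ∈ G.verts ↔ u ∈ G.verts)) :
    K.IsRelWeb := by
  have toH : ∀ {a}, a ∈ K.verts → a ∉ G.verts → a ∈ H.verts := fun ha haG =>
    (Finset.mem_union.1 (hKv ▸ ha)).resolve_left haG
  refine IsRelWeb.mk' hmix (hKv ▸ hG.2.1.mono Finset.subset_union_left) htrans ?_ ?_ ?_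
  · intro w hw x hx y hy z hz hP
    obtain ⟨hxw, hyw, hzw⟩ := hP4 w x y z hP
    by_cases hwG : w ∈ G.verts
    · exact hKG.not_isInducedP4 hG subset_rfl hwG (hxw.2 hwG) (hyw.2 hwG) (hzw.2 hwG) hP
    · exact hKH.not_isInducedP4 hH subset_rfl (toH hw hwG) (toH hx (hxw.not.2 hwG))
        (toH hy (hyw.not.2 hwG)) (toH hz (hzw.not.2 hwG)) hP
  · intro u hu v hv y hy z hz hP
    obtain ⟨hvu, hyu, hzu⟩ := hN u v y z hP
    by_cases huG : u ∈ G.verts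
    · exact hKG.not_isInducedN hG subset_rfl huG (hvu.2 huG) (hyu.2 huG) (hzu.2 huG) hP
    · exact hKH.not_isInducedN hH subset_rfl (toH hu huG) (toH hv (hvu.not.2 huG))
        (toH hy (hyu.not.2 huG)) (toH hz (hzu.not.2 huG)) hP
  · intro u hu w hw v hv hP
    obtain ⟨hwu, hvu⟩ := hT u w v hP
    by_cases huG : u ∈ G.verts
    · exact hKG.not_isTricolor hG subset_rfl huG (hwu.2 huG) (hvu.2 huG) hP
    · exact hKH.not_isTricolor hH subset_rfl (toH hu huG) (toH hw (hwu.not.2 huG))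
        (toH hv (hvu.not.2 huG)) hP

section Glue

variable (hG : G.IsRelWeb) (hH : H.IsRelWeb) (hd : Disjoint G.verts H.verts)
include hG hH hd

theorem isRelWeb_uparr : (uparr G H).IsRelWeb := by
  refine hG.of_glue hH rfl ?_ ?_ ?_ ?_ ?_ ?_ ?_ <;>
    have := Finset.disjoint_left.mp hd <;>
    obtain ⟨⟨_, _, _, _, _, _⟩, -, _, -⟩ := hG <;>
    obtain ⟨⟨_, _, _, _, _, _⟩, -, _, -⟩ := hH <;>
    simp only [AgreeOn, IsMixed, IsInducedP4, IsInducedN, IsTricolor, noEdge, uparr,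
      Finset.mem_union] <;> grind

theorem isRelWeb_utens : (utens G H).IsRelWeb := by
  refine hG.of_glue hH rfl ?_ ?_ ?_ ?_ ?_ ?_ ?_ <;>
    have := Finset.disjoint_left.mp hd <;>
    obtain ⟨⟨_, _, _, _, _, _⟩, -, _, -⟩ := hG <;>
    obtain ⟨⟨_, _, _, _, _, _⟩, -, _, -⟩ := hH <;>
    simp only [AgreeOn, IsMixed, IsInducedP4, IsInducedN, IsTricolor, noEdge, utens,
      Finset.mem_union] <;> grind

theorem isRelWeb_useq : (useq G H).IsRelWeb := by
  refine hG.of_glue hH rfl ?_ ?_ ?_ ?_ ?_ ?_ ?_ <;>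
    have := Finset.disjoint_left.mp hd <;>
    obtain ⟨⟨_, _, _, _, _, _⟩, -, _, -⟩ := hG <;>
    obtain ⟨⟨_, _, _, _, _, _⟩, -, _, -⟩ := hH <;>
    simp only [AgreeOn, IsMixed, IsInducedP4, IsInducedN, IsTricolor, noEdge, useq,
      Finset.mem_union] <;> grind

end Glue

theorem isRelWeb_single (n : ℕ) :
    (⟨{n}, fun _ _ => False, fun _ _ => False⟩ : MGraph).IsRelWeb := by
  refine IsRelWeb.mk' ?_ ⟨n, Finset.mem_singleton_self n⟩ (fun _ _ _ h => h.elim) ?_ ?_ ?_ <;>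
    simp [IsMixed, IsInducedP4, IsInducedN, IsTricolor]

theorem Constructible.isRelWeb (h : G.Constructible) : G.IsRelWeb := by
  induction h with
  | single n => exact isRelWeb_single n
  | parr _ _ hd hG hH => exact isRelWeb_uparr hG hH hd
  | tens _ _ hd hG hH => exact isRelWeb_utens hG hH hd
  | seq _ _ hd hG hH => exact isRelWeb_useq hG hH hd

inductive EdgeKind
  | none
  | undirected
  | directed

open Classical in
noncomputable def edgeKind (G : MGraph) (u v : ℕ) : EdgeKind :=
  if G.R u v then .undirected else if G.lt u v ∨ G.lt v u then .directed else .none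

theorem edgeKind_eq_undirected : G.edgeKind u v = .undirected ↔ G.R u v := by
  unfold edgeKind; split_ifs <;> simp_all

theorem IsMixed.edgeKind_eq_directed (hG : G.IsMixed) :
    G.edgeKind u v = .directed ↔ G.lt u v ∨ G.lt v u := by
  unfold edgeKind
  split_ifs with hR hlt
  · simp only [false_iff, not_or]
    exact ⟨fun h => hG.not_R_of_lt h hR, fun h => hG.not_R_of_lt h (hG.R_symm hR)⟩
  · simpa using hlt
  · simpa using hlt

theorem IsMixed.edgeKind_eq_none (hG : G.IsMixed) : G.edgeKind u v = .none ↔ G.noEdge u v := by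
  unfold edgeKind noEdge
  have := fun h : G.R v u => hG.R_symm h
  split_ifs <;> simp only [false_iff, true_iff] <;> tauto

theorem IsMixed.edgeKind_comm (hG : G.IsMixed) (u v : ℕ) : G.edgeKind u v = G.edgeKind v u := by
  unfold edgeKind
  have := fun h : G.R u v => hG.R_symm h
  have := fun h : G.R v u => hG.R_symm h
  split_ifs <;> first | rfl | (exfalso; tauto)

theorem IsMixed.edgeKind_self (hG : G.IsMixed) (v : ℕ) : G.edgeKind v v = .none :=
  hG.edgeKind_eq_none.2 ⟨hG.not_R_self v, hG.not_R_self v, hG.not_lt_self v, hG.not_lt_self v⟩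

theorem IsMixed.mem_of_edgeKind_ne_none (hG : G.IsMixed) (h : G.edgeKind u v ≠ .none) :
    u ∈ G.verts ∧ v ∈ G.verts := by
  unfold edgeKind at h
  split_ifs at h with hR hlt
  · exact hG.mem_of_R hR
  · rcases hlt with hlt | hlt
    · exact hG.mem_of_lt hlt
    · exact (hG.mem_of_lt hlt).symm
  · exact absurd rfl h

theorem IsRelWeb.false_of_edgeKind_tricolor (hG : G.IsRelWeb) (h₁ : G.edgeKind u w = .none)
    (h₂ : G.edgeKind w v = .undirected) (h₃ : G.edgeKind u v = .directed) : False := by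
  have hm := hG.1
  have huw : u ≠ w := by rintro rfl; simp [h₂] at h₃
  have huv : u ≠ v := by rintro rfl; simp [hm.edgeKind_self] at h₃
  have hwv : w ≠ v := by rintro rfl; simp [hm.edgeKind_self] at h₂
  have hwv' := hm.mem_of_edgeKind_ne_none (u := w) (v := v) (by simp [h₂])
  have huv' := hm.mem_of_edgeKind_ne_none (u := u) (v := v) (by simp [h₃])
  exact hG.not_isTricolor huv'.1 hwv'.1 hwv'.2 ⟨huw, huv, hwv, hm.edgeKind_eq_none.1 h₁,
    edgeKind_eq_undirected.1 h₂, hm.edgeKind_eq_directed.1 h₃⟩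

theorem IsRelWeb.edgeKind_eq_of_ne_of_ne (hG : G.IsRelWeb) (h₁ : G.edgeKind x y ≠ G.edgeKind y z)
    (h₂ : G.edgeKind x z ≠ G.edgeKind y z) : G.edgeKind x y = G.edgeKind x z := by
  by_contra h₃
  have hc := hG.1.edgeKind_comm
  cases hxy : G.edgeKind x y <;> cases hyz : G.edgeKind y z <;> cases hxz : G.edgeKind x z <;>
    simp only [hxy, hyz, hxz, ne_eq, not_true_eq_false] at h₁ h₂ h₃
  · exact hG.false_of_edgeKind_tricolor hxy hyz hxz
  · exact hG.false_of_edgeKind_tricolor ((hc y x).trans hxy) hxz hyz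
  · exact hG.false_of_edgeKind_tricolor ((hc z y).trans hyz) ((hc y x).trans hxy)
      ((hc z x).trans hxz)
  · exact hG.false_of_edgeKind_tricolor ((hc z x).trans hxz) hxy ((hc z y).trans hyz)
  · exact hG.false_of_edgeKind_tricolor hyz ((hc z x).trans hxz) ((hc y x).trans hxy)
  · exact hG.false_of_edgeKind_tricolor hxz ((hc z y).trans hyz) hxy

/-- Orienting the first comparability forces the orientation of the other two, and the path
becomes an induced `N`. -/
theorem IsRelWeb.false_of_comparability_P4 (hG : G.IsRelWeb) {a b p q : ℕ}
    (hab : a ≠ b) (hap : a ≠ p) (haq : a ≠ q) (hbp : b ≠ p) (hbq : b ≠ q) (hpq : p ≠ q)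
    (h₁ : G.lt a b ∨ G.lt b a) (h₂ : G.lt b p ∨ G.lt p b) (h₃ : G.lt p q ∨ G.lt q p)
    (n₁ : ¬ (G.lt a p ∨ G.lt p a)) (n₂ : ¬ (G.lt a q ∨ G.lt q a))
    (n₃ : ¬ (G.lt b q ∨ G.lt q b)) : False := by
  push Not at n₁ n₂ n₃
  have hm := hG.1
  rcases h₁ with hab' | hba
  · have hpb : G.lt p b := h₂.resolve_left fun h => n₁.1 (hG.lt_trans hab' h)
    have hpq' : G.lt p q := h₃.resolve_right fun h => n₃.2 (hG.lt_trans h hpb)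
    exact hG.not_isInducedN (hm.mem_of_lt hab').1 (hm.mem_of_lt hab').2 (hm.mem_of_lt hpq').1
      (hm.mem_of_lt hpq').2 ⟨hab, hap, haq, hbp, hbq, hpq, hab', hpb, hpq', n₁.1, n₁.2, n₂.1,
        n₂.2, n₃.1, n₃.2⟩
  · have hbp' : G.lt b p := h₂.resolve_right fun h => n₁.2 (hG.lt_trans h hba)
    have hqp : G.lt q p := h₃.resolve_left fun h => n₃.1 (hG.lt_trans hbp' h)
    exact hG.not_isInducedN (hm.mem_of_lt hqp).1 (hm.mem_of_lt hqp).2 (hm.mem_of_lt hba).1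
      (hm.mem_of_lt hba).2 ⟨hpq.symm, hbq.symm, haq.symm, hbp.symm, hap.symm, hab.symm, hqp, hbp',
        hba, n₃.2, n₃.1, n₂.2, n₂.1, n₁.2, n₁.1⟩

theorem IsRelWeb.false_of_monochromatic_P4 (hG : G.IsRelWeb) {c : EdgeKind} (hc : c ≠ .none)
    {a b p q : ℕ} (h₁ : G.edgeKind a b = c) (h₂ : G.edgeKind b p = c) (h₃ : G.edgeKind p q = c)
    (n₁ : G.edgeKind a p ≠ c) (n₂ : G.edgeKind a q ≠ c) (n₃ : G.edgeKind b q ≠ c) : False := by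
  have hm := hG.1
  have hab : a ≠ b := by rintro rfl; exact hc (h₁ ▸ hm.edgeKind_self a)
  have hbp : b ≠ p := by rintro rfl; exact hc (h₂ ▸ hm.edgeKind_self b)
  have hpq : p ≠ q := by rintro rfl; exact hc (h₃ ▸ hm.edgeKind_self p)
  have hap : a ≠ p := by rintro rfl; exact n₂ h₃
  have haq : a ≠ q := by rintro rfl; exact n₃ ((hm.edgeKind_comm b a).trans h₁)
  have hbq : b ≠ q := by rintro rfl; exact n₂ h₁
  cases c with
  | none => exact hc rfl
  | undirected =>
    simp only [ne_eq, edgeKind_eq_undirected] at h₁ h₂ h₃ n₁ n₂ n₃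
    exact hG.not_isInducedP4 (hm.mem_of_R h₁).1 (hm.mem_of_R h₁).2 (hm.mem_of_R h₃).1
      (hm.mem_of_R h₃).2 ⟨hab, hap, haq, hbp, hbq, hpq, h₁, h₂, h₃, n₁, n₂, n₃⟩
  | directed =>
    simp only [ne_eq, hm.edgeKind_eq_directed] at h₁ h₂ h₃ n₁ n₂ n₃
    exact hG.false_of_comparability_P4 hab hap haq hbp hbq hpq h₁ h₂ h₃ n₁ n₂ n₃

/-- Otherwise the pairs of kind `d` form the path `z - x - v - y` and those of kind `k` its
complement, the path `v - z - y - x`; one of `d`, `k` is not `none`. -/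
theorem IsRelWeb.edgeKind_eq_of_witness (hG : G.IsRelWeb) {d k : EdgeKind} (hdk : d ≠ k)
    (hvx : G.edgeKind v x = d) (hvz : G.edgeKind v z = k) (hvy : G.edgeKind v y = d)
    (hxy : G.edgeKind x y = k) (hzy : G.edgeKind z y = k) : G.edgeKind x z = k := by
  have hc := hG.1.edgeKind_comm
  by_contra hxz
  have hxz' : G.edgeKind x z = d := by
    have := hG.edgeKind_eq_of_ne_of_ne (x := x) (y := v) (z := z)
      (by rwa [hc x v, hvx, hvz]) (by rw [hvz]; exact hxz)
    rw [← this, hc, hvx]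
  by_cases hd : d = .none
  · exact hG.false_of_monochromatic_P4 (c := k) (fun h => hdk (hd.trans h.symm)) hvz hzy
      ((hc y x).trans hxy) (by rw [hvy]; exact hdk) (by rw [hvx]; exact hdk)
      (by rw [hc, hxz']; exact hdk)
  · exact hG.false_of_monochromatic_P4 hd ((hc z x).trans hxz') ((hc x v).trans hvx) hvy
      (by rw [hc, hvz]; exact hdk.symm) (by rw [hzy]; exact hdk.symm)
      (by rw [hxy]; exact hdk.symm)

section Extend

variable {V A B : Finset ℕ} {k : EdgeKind} {a₀ b₀ : ℕ}

theorem IsRelWeb.edgeKind_eq_of_isSplit (hG : G.IsRelWeb)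
    (hs : IsSplit V A B (G.edgeKind · · = k)) (ha₀ : a₀ ∈ A) (hb₀ : b₀ ∈ B)
    (hka : G.edgeKind v a₀ ≠ k) (hkb : G.edgeKind v b₀ ≠ k) {u : ℕ} (hu : u ∈ V)
    (hku : G.edgeKind v u ≠ k) : G.edgeKind v u = G.edgeKind v a₀ := by
  have hkind : ∀ x y, G.edgeKind x y = k → G.edgeKind v x ≠ k → G.edgeKind v y ≠ k →
      G.edgeKind v x = G.edgeKind v y := fun x y hxy hx hy =>
    hG.edgeKind_eq_of_ne_of_ne (hxy ▸ hx) (hxy ▸ hy)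
  rcases Finset.mem_union.1 (hs.union_eq ▸ hu) with huA | huB
  · exact (hkind u b₀ (hs.rel u huA b₀ hb₀) hku hkb).trans
      (hkind a₀ b₀ (hs.rel a₀ ha₀ b₀ hb₀) hka hkb).symm
  · exact (hkind a₀ u (hs.rel a₀ ha₀ u huB) hka hku).symm

theorem IsRelWeb.edgeKind_eq_of_isSplit_of_ne (hG : G.IsRelWeb)
    (hs : IsSplit V A B (G.edgeKind · · = k)) (ha₀ : a₀ ∈ A) (hb₀ : b₀ ∈ B)
    (hka : G.edgeKind v a₀ ≠ k) (hkb : G.edgeKind v b₀ ≠ k) {x z : ℕ} (hx : x ∈ V) (hz : z ∈ V)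
    (hvx : G.edgeKind v x ≠ k) (hvz : G.edgeKind v z = k) : G.edgeKind x z = k := by
  have hsymm : ∀ a b, G.edgeKind a b = k → G.edgeKind b a = k := fun a b h =>
    (hG.1.edgeKind_comm b a).trans h
  have hd : ∀ u ∈ V, G.edgeKind v u ≠ k → G.edgeKind v u = G.edgeKind v a₀ := fun _ hu =>
    hG.edgeKind_eq_of_isSplit hs ha₀ hb₀ hka hkb hu
  have hvx := hd x hx hvx
  rcases Finset.mem_union.1 (hs.union_eq ▸ hx) with hxA | hxB <;>
    rcases Finset.mem_union.1 (hs.union_eq ▸ hz) with hzA | hzB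
  · exact hG.edgeKind_eq_of_witness hka hvx hvz (hd b₀ (hs.right_subset hb₀) hkb)
      (hs.rel x hxA b₀ hb₀) (hs.rel z hzA b₀ hb₀)
  · exact hs.rel x hxA z hzB
  · exact hsymm _ _ (hs.rel z hzA x hxB)
  · exact hG.edgeKind_eq_of_witness hka hvx hvz rfl (hsymm _ _ (hs.rel a₀ ha₀ x hxB))
      (hsymm _ _ (hs.rel a₀ ha₀ z hzB))

/-- If `v` cannot join one of the two sides, then all its pairs not of kind `k` have a common kind
(no rainbow triangle), and `v` together with these partners splits off from the rest. -/
theorem IsRelWeb.exists_isSplit_insert (hG : G.IsRelWeb)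
    (hs : IsSplit V A B (G.edgeKind · · = k)) (hv : v ∉ V) :
    ∃ A' B' c, IsSplit (insert v V) A' B' (G.edgeKind · · = c) := by
  classical
  have hsymm : ∀ a b, G.edgeKind a b = k → G.edgeKind b a = k := fun a b h =>
    (hG.1.edgeKind_comm b a).trans h
  by_cases hB : ∀ b ∈ B, G.edgeKind v b = k
  · exact ⟨_, _, _, hs.insert_left hv hB⟩
  by_cases hA : ∀ a ∈ A, G.edgeKind v a = k
  · exact ⟨_, _, _, ((hs.symm hsymm).insert_left hv hA).symm hsymm⟩
  push Not at hA hB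
  obtain ⟨a₀, ha₀, hka⟩ := hA
  obtain ⟨b₀, hb₀, hkb⟩ := hB
  set Z := V.filter (G.edgeKind v · = k)
  rcases Z.eq_empty_or_nonempty with hZ | hZ
  · refine ⟨{v}, V, G.edgeKind v a₀, Finset.singleton_nonempty v, ⟨a₀, hs.left_subset ha₀⟩,
      Finset.disjoint_singleton_left.2 hv, (Finset.insert_eq v V).symm, ?_⟩
    rintro a ha b hb
    rw [Finset.mem_singleton.1 ha]
    refine hG.edgeKind_eq_of_isSplit hs ha₀ hb₀ hka hkb hb fun hbk => ?_
    exact Finset.notMem_empty b (hZ ▸ Finset.mem_filter.2 ⟨hb, hbk⟩)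
  · refine ⟨insert v (V.filter (G.edgeKind v · ≠ k)), Z, k, Finset.insert_nonempty _ _, hZ,
      Finset.disjoint_insert_left.2 ⟨fun h => hv (Finset.mem_filter.1 h).1,
        (Finset.disjoint_filter_filter_not V V _).symm⟩, ?_, ?_⟩
    · rw [Finset.insert_union, Finset.union_comm, Finset.filter_union_filter_not_eq]
    · intro a ha b hb
      obtain ⟨hbV, hbk⟩ := Finset.mem_filter.1 hb
      rcases Finset.mem_insert.1 ha with rfl | ha
      · exact hbk
      · obtain ⟨haV, hak⟩ := Finset.mem_filter.1 ha
        exact hG.edgeKind_eq_of_isSplit_of_ne hs ha₀ hb₀ hka hkb haV hbV hak hbk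

end Extend

theorem IsRelWeb.exists_isSplit (hG : G.IsRelWeb) {V : Finset ℕ} (hV : 2 ≤ V.card) :
    ∃ A B c, IsSplit V A B (G.edgeKind · · = c) := by
  induction V using Finset.induction_on with
  | empty => simp at hV
  | insert v V hv ih =>
    rw [Finset.card_insert_of_notMem hv] at hV
    rcases (by omega : V.card = 1 ∨ 2 ≤ V.card) with h1 | h2
    · obtain ⟨u, rfl⟩ := Finset.card_eq_one.1 h1
      exact ⟨{v}, {u}, G.edgeKind v u, Finset.singleton_nonempty v, Finset.singleton_nonempty u,
        Finset.disjoint_singleton.2 fun h => hv (h ▸ Finset.mem_singleton_self v),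
        (Finset.insert_eq v {u}).symm, by simp⟩
    · obtain ⟨A, B, k, hs⟩ := ih h2
      exact hG.exists_isSplit_insert hs hv

theorem IsRelWeb.lt_iff_lt_of_incomparable (hG : G.IsRelWeb) {b c : ℕ} (hbc : ¬ G.lt b c)
    (hcb : ¬ G.lt c b) (hb : G.lt w b ∨ G.lt b w) (hc : G.lt w c ∨ G.lt c w) :
    (G.lt w b ↔ G.lt w c) ∧ (G.lt b w ↔ G.lt c w) := by
  have := @hG.lt_trans
  grind

def IncompReach (G : MGraph) (V : Finset ℕ) (a : ℕ) : ℕ → Prop :=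
  Relation.ReflTransGen (fun u w => w ∈ V ∧ ¬ G.lt u w ∧ ¬ G.lt w u) a

section IncompReach

variable {V A B : Finset ℕ} {a : ℕ}

theorem IncompReach.comparable (hu : G.IncompReach V a u) (hw : w ∈ V)
    (hnw : ¬ G.IncompReach V a w) : G.lt w u ∨ G.lt u w := by
  by_contra h
  push Not at h
  exact hnw (Relation.ReflTransGen.tail hu ⟨hw, h.2, h.1⟩)

theorem IncompReach.mem_of_isSplit (hs : IsSplit V A B fun a b => G.lt a b ∨ G.lt b a)
    (ha : a ∈ A) (hu : G.IncompReach V a u) : u ∈ A := by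
  induction hu with
  | refl => exact ha
  | tail _ hbc ih =>
    obtain ⟨hc, hbc, hcb⟩ := hbc
    refine (Finset.mem_union.1 (hs.union_eq ▸ hc)).resolve_right fun hcB => ?_
    exact (hs.rel _ ih _ hcB).elim hbc hcb

theorem IsRelWeb.lt_iff_of_incompReach (hG : G.IsRelWeb) (hu : G.IncompReach V a u)
    (hw : w ∈ V) (hnw : ¬ G.IncompReach V a w) :
    (G.lt w a ↔ G.lt w u) ∧ (G.lt a w ↔ G.lt u w) := by
  induction hu with
  | refl => exact ⟨Iff.rfl, Iff.rfl⟩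
  | @tail b c hb hbc ih =>
    have := hG.lt_iff_lt_of_incomparable hbc.2.1 hbc.2.2 (IncompReach.comparable hb hw hnw)
      (IncompReach.comparable (hb.tail hbc) hw hnw)
    exact ⟨ih.1.trans this.1, ih.2.trans this.2⟩

end IncompReach

/-- Every vertex outside the incomparability component `C` of `a₀` lies either below all of `C` or
above all of `C`; split off the vertices below `C`, or `C` itself if there are none. -/
theorem IsRelWeb.exists_isSplit_lt (hG : G.IsRelWeb) {V A B : Finset ℕ}
    (hs : IsSplit V A B fun a b => G.lt a b ∨ G.lt b a) : ∃ A' B', IsSplit V A' B' G.lt := by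
  classical
  obtain ⟨a₀, ha₀⟩ := hs.left_nonempty
  have hreach : G.IncompReach V a₀ a₀ := .refl
  set C := V.filter (G.IncompReach V a₀)
  set D := V.filter fun w => ¬ G.IncompReach V a₀ w ∧ G.lt w a₀
  rcases D.eq_empty_or_nonempty with hD | ⟨w₀, hw₀⟩
  · obtain ⟨b₀, hb₀⟩ := hs.right_nonempty
    refine ⟨C, V \ C, ⟨a₀, Finset.mem_filter.2 ⟨hs.left_subset ha₀, hreach⟩⟩,
      ⟨b₀, Finset.mem_sdiff.2 ⟨hs.right_subset hb₀, fun hb₀C => ?_⟩⟩, Finset.disjoint_sdiff,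
      Finset.union_sdiff_of_subset (Finset.filter_subset _ _), ?_⟩
    · exact Finset.disjoint_left.1 hs.disjoint
        ((Finset.mem_filter.1 hb₀C).2.mem_of_isSplit hs ha₀) hb₀
    · intro u hu w hw
      obtain ⟨hwV, hwC⟩ := Finset.mem_sdiff.1 hw
      have hnw : ¬ G.IncompReach V a₀ w := fun h => hwC (Finset.mem_filter.2 ⟨hwV, h⟩)
      have hlt : G.lt a₀ w := (hreach.comparable hwV hnw).resolve_left fun h =>
        Finset.notMem_empty w (hD ▸ Finset.mem_filter.2 ⟨hwV, hnw, h⟩)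
      exact (hG.lt_iff_of_incompReach (Finset.mem_filter.1 hu).2 hwV hnw).2.1 hlt
  · refine ⟨D, V \ D, ⟨w₀, hw₀⟩, ⟨a₀, Finset.mem_sdiff.2 ⟨hs.left_subset ha₀, fun h =>
      (Finset.mem_filter.1 h).2.1 hreach⟩⟩, Finset.disjoint_sdiff,
      Finset.union_sdiff_of_subset (Finset.filter_subset _ _), ?_⟩
    intro w hw q hq
    obtain ⟨hwV, hnw, hwa⟩ := Finset.mem_filter.1 hw
    obtain ⟨hqV, hqD⟩ := Finset.mem_sdiff.1 hq
    by_cases hrq : G.IncompReach V a₀ q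
    · exact (hG.lt_iff_of_incompReach hrq hwV hnw).1.1 hwa
    · have haq := (hreach.comparable hqV hrq).resolve_left fun h =>
        hqD (Finset.mem_filter.2 ⟨hqV, hrq, h⟩)
      exact hG.lt_trans hwa haq

theorem ext {G H : MGraph} (hv : G.verts = H.verts) (hR : ∀ u v, G.R u v ↔ H.R u v)
    (hlt : ∀ u v, G.lt u v ↔ H.lt u v) : G = H := by
  cases G; cases H
  simp only [mk.injEq]
  exact ⟨hv, funext₂ fun u v => propext (hR u v), funext₂ fun u v => propext (hlt u v)⟩

section Decompose

variable {A B : Finset ℕ}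

theorem IsMixed.eq_single (hG : G.IsMixed) {m : ℕ} (hm : G.verts = {m}) :
    G = ⟨{m}, fun _ _ => False, fun _ _ => False⟩ := by
  obtain ⟨-, _, _, -, _, _⟩ := hG
  refine ext hm (fun u v => ?_) (fun u v => ?_) <;> simp only [iff_false] <;> grind

theorem IsMixed.eq_uparr_restrict (hG : G.IsMixed) (hs : IsSplit G.verts A B G.noEdge) :
    G = uparr (G.restrict A) (G.restrict B) := by
  obtain ⟨-, -, -, -, _, _⟩ := hG
  have := hs.rel; have := hs.union_eq
  refine ext hs.union_eq.symm (fun u v => ?_) (fun u v => ?_) <;>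
    simp only [uparr, restrict_R, restrict_lt, noEdge] at * <;> grind

theorem IsMixed.eq_utens_restrict (hG : G.IsMixed) (hs : IsSplit G.verts A B G.R) :
    G = utens (G.restrict A) (G.restrict B) := by
  obtain ⟨_, -, -, _, _, _⟩ := hG
  have := hs.rel; have := hs.union_eq
  refine ext hs.union_eq.symm (fun u v => ?_) (fun u v => ?_) <;>
    simp only [utens, restrict_R, restrict_lt, restrict_verts] at * <;> grind

theorem IsRelWeb.eq_useq_restrict (hG : G.IsRelWeb) (hs : IsSplit G.verts A B G.lt) :
    G = useq (G.restrict A) (G.restrict B) := by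
  obtain ⟨⟨_, -, _, _, _, _⟩, -, _, -⟩ := hG
  have := hs.rel; have := hs.union_eq
  refine ext hs.union_eq.symm (fun u v => ?_) (fun u v => ?_) <;>
    simp only [useq, restrict_R, restrict_lt, restrict_verts] at * <;> grind

end Decompose

theorem IsRelWeb.constructible (hG : G.IsRelWeb) : G.Constructible := by
  induction hn : G.verts.card using Nat.strong_induction_on generalizing G with
  | _ n ih =>
  have hm := hG.1
  have parts : ∀ {A B r}, IsSplit G.verts A B r →
      (G.restrict A).Constructible ∧ (G.restrict B).Constructible := fun hs =>
    ⟨ih _ (hn ▸ hs.card_left_lt) (hG.restrict hs.left_subset hs.left_nonempty) rfl,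
      ih _ (hn ▸ hs.card_right_lt) (hG.restrict hs.right_subset hs.right_nonempty) rfl⟩
  rcases Nat.lt_or_ge n 2 with hn2 | hn2
  · have := hG.2.1.card_pos
    obtain ⟨m, hverts⟩ := Finset.card_eq_one.1 (show G.verts.card = 1 by omega)
    rw [hm.eq_single hverts]
    exact .single m
  obtain ⟨A, B, c, hs⟩ := hG.exists_isSplit (hn ▸ hn2)
  cases c with
  | none =>
    rw [hm.eq_uparr_restrict (hs.mono fun _ _ => hm.edgeKind_eq_none.1)]
    exact .parr (parts hs).1 (parts hs).2 hs.disjoint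
  | undirected =>
    rw [hm.eq_utens_restrict (hs.mono fun _ _ => edgeKind_eq_undirected.1)]
    exact .tens (parts hs).1 (parts hs).2 hs.disjoint
  | directed =>
    obtain ⟨A', B', hs'⟩ := hG.exists_isSplit_lt (hs.mono fun _ _ => hm.edgeKind_eq_directed.1)
    rw [hG.eq_useq_restrict hs']
    exact .seq (parts hs').1 (parts hs').2 hs'.disjoint

end MGraph

theorem relweb_iff_constructible_general (G : MGraph) :
    G.IsRelWeb ↔ MGraph.Constructible G :=
  ⟨MGraph.IsRelWeb.constructible, MGraph.Constructible.isRelWeb⟩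

/-- A mixed graph is a relation web if and only if it can be constructed
from single vertices using the three operations. -/
theorem relweb_iff_constructible (G : MGraph) (hG : G.IsMixed) :
    G.IsRelWeb ↔ MGraph.Constructible G :=
  relweb_iff_constructible_general G
end
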